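/- arXiv:1311.1876 — 9 statements merged into one kernel-verified Lean document; each statement's English description precedes it below -/
import Mathlib

section
/- Suppose B ≠ 0 and Q > 0 (so that λ > |a|). Let 𝒜 be the 2×2 real matrix [[a, −B²/R], [−Q, −a]]. Then for every t ∈ [0, T], the (2,2) entry of exp((T−t)𝒜) is nonzero and −[(exp((T−t)𝒜))₂₂]⁻¹ · (exp((T−t)𝒜))₂₁ = Q(e^{2λ(T−t)} − 1)/[(λ − a)e^{2λ(T−t)} + (λ + a)], i.e. this matrix-exponential expression equals β(t). -/
open Real Set

noncomputable section

/-- Bundle of the real model constants of the mean-field LQG game. -/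
structure P where
  A : ℝ
  B : ℝ
  C : ℝ
  D : ℝ
  F : ℝ
  H : ℝ
  K : ℝ
  L : ℝ
  Q : ℝ
  R : ℝ
  S : ℝ
  eta : ℝ
  sig : ℝ
  N0 : ℝ
  T : ℝ
  x0 : ℝ

namespace P

variable (p : P)

/-- `a := A + σ²/2`. -/
def a : ℝ := p.A + p.sig ^ 2 / 2

/-- `λ := √(a² + B²Q/R)`. -/
def lam : ℝ := Real.sqrt (p.a ^ 2 + p.B ^ 2 * p.Q / p.R)

/-- `β(t) := Q(e^{2λ(T−t)} − 1)/[(λ − a)e^{2λ(T−t)} + (λ + a)]`. -/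
def beta (t : ℝ) : ℝ :=
  p.Q * (Real.exp (2 * p.lam * (p.T - t)) - 1) /
    ((p.lam - p.a) * Real.exp (2 * p.lam * (p.T - t)) + (p.lam + p.a))

/-- `𝔸(t) := A − (B²/R)β(t)`. -/
def AA (t : ℝ) : ℝ := p.A - p.B ^ 2 / p.R * p.beta t

/-- `Γₛᵗ := exp(∫ₛᵗ 𝔸(r) dr)`. -/
def Gam (s t : ℝ) : ℝ := Real.exp (∫ r in s..t, p.AA r)

/-- `Γ̄ := exp(∫₀ᵀ |𝔸(r)| dr)`. -/
def GamBar : ℝ := Real.exp (∫ r in (0 : ℝ)..p.T, |p.AA r|)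

/-- `Θ₆(s) := (BD/R)β(s) − H`. -/
def Th6 (s : ℝ) : ℝ := p.B * p.D / p.R * p.beta s - p.H

/-- `α(t) := −K e^{C(T−t)} Γₜᵀ + ∫ₜᵀ e^{C(v−t)} Γₜᵛ Θ₆(v) dv`. -/
def alpha (t : ℝ) : ℝ :=
  -p.K * Real.exp (p.C * (p.T - t)) * p.Gam t p.T +
    ∫ v in t..p.T, Real.exp (p.C * (v - t)) * p.Gam t v * p.Th6 v

/-- `ζ(t) := −α(t)`. -/
def zeta (t : ℝ) : ℝ := -p.alpha t

/-- `ξ(t) := ∫ₜᵀ e^{2C(v−t)} [(BD/R − (B²/R)α(v))ζ(v) + D²/R − (BD/R)α(v)] dv`. -/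
def xi (t : ℝ) : ℝ :=
  ∫ v in t..p.T, Real.exp (2 * p.C * (v - t)) *
    ((p.B * p.D / p.R - p.B ^ 2 / p.R * p.alpha v) * p.zeta v +
      p.D ^ 2 / p.R - p.B * p.D / p.R * p.alpha v)

/-- `Θ₁(s) := ((B²/R)α(s) − BD/R)·N₀/(1 + ξ(0)N₀)`. -/
def Th1 (s : ℝ) : ℝ :=
  (p.B ^ 2 / p.R * p.alpha s - p.B * p.D / p.R) * p.N0 / (1 + p.xi 0 * p.N0)

/-- `Θ₂(r) := −((B²/R)ζ(r) + BD/R)`. -/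
def Th2 (r : ℝ) : ℝ := -(p.B ^ 2 / p.R * p.zeta r + p.B * p.D / p.R)

/-- `Θ₃(v) := Fβ(v) − QS`. -/
def Th3 (v : ℝ) : ℝ := p.F * p.beta v - p.Q * p.S

/-- `Θ₄(r) := Fζ(r) + L`. -/
def Th4 (r : ℝ) : ℝ := p.F * p.zeta r + p.L

/-- `Θ̄₁ := ∫₀ᵀ |Θ₁(s)| ds`. -/
def ThBar1 : ℝ := ∫ s in (0 : ℝ)..p.T, |p.Th1 s|

/-- `Θ̄₂ := ∫₀ᵀ |Θ₂(s)| ds`. -/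
def ThBar2 : ℝ := ∫ s in (0 : ℝ)..p.T, |p.Th2 s|

/-- `Θ̄₃ := ∫₀ᵀ |Θ₃(s)| ds`. -/
def ThBar3 : ℝ := ∫ s in (0 : ℝ)..p.T, |p.Th3 s|

/-- `Θ̄₄ := ∫₀ᵀ |Θ₄(s)| ds`. -/
def ThBar4 : ℝ := ∫ s in (0 : ℝ)..p.T, |p.Th4 s|

/-- `γ[x̄](t) := ∫ₜᵀ Γₜᵛ (Θ₃(v)x̄(v) − Qη) dv`. -/
def gam (xb : ℝ → ℝ) (t : ℝ) : ℝ :=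
  ∫ v in t..p.T, p.Gam t v * (p.Th3 v * xb v - p.Q * p.eta)

/-- `τ[x̄](t)`, the second force-rate function. -/
def tau (xb : ℝ → ℝ) (t : ℝ) : ℝ :=
  (∫ r in t..p.T, Real.exp (p.C * (r - t)) * p.Th2 r *
      (∫ v in r..p.T, p.Gam r v * (p.Th3 v * xb v - p.Q * p.eta))) +
    ∫ r in t..p.T, Real.exp (p.C * (r - t)) * p.Th4 r * xb r

/-- The fixed-point map `𝒯` of the consistency condition system. -/
def Tmap (xb : ℝ → ℝ) (t : ℝ) : ℝ :=
  p.Gam 0 t * Real.exp (p.F * t) * p.x0 +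
    ∫ s in (0 : ℝ)..t, p.Gam s t * Real.exp (p.F * (t - s)) *
      ((p.zeta 0 * p.x0 + p.tau xb 0) * p.Th1 s * Real.exp (p.C * s) -
        p.B ^ 2 / p.R * p.gam xb s)

end P

lemma exp_entries (a lam b Q s : ℝ) (hb : 0 < b) (hlam : 0 < lam)
    (hlamsq : lam ^ 2 = a ^ 2 + b * Q) :
    (NormedSpace.exp (s • (!![a, -b; -Q, -a] : Matrix (Fin 2) (Fin 2) ℝ))) 1 1
      = ((lam - a) * Real.exp (s*lam) + (lam + a) * Real.exp (-(s*lam))) / (2*lam) ∧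
    (NormedSpace.exp (s • (!![a, -b; -Q, -a] : Matrix (Fin 2) (Fin 2) ℝ))) 1 0
      = -(Q * (Real.exp (s*lam) - Real.exp (-(s*lam))) / (2*lam)) := by
  set M : Matrix (Fin 2) (Fin 2) ℝ := !![a, -b; -Q, -a] with hM
  set U : Matrix (Fin 2) (Fin 2) ℝ := !![b, b; a - lam, a + lam] with hU
  set V : Matrix (Fin 2) (Fin 2) ℝ := (2*b*lam)⁻¹ • !![a + lam, -b; lam - a, b] with hV
  have hUV : U * V = 1 := by
    ext i j
    fin_cases i <;> fin_cases j <;>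
      simp [hU, hV, Matrix.mul_apply, Fin.sum_univ_two, Matrix.one_apply] <;>
      field_simp <;> ring
  have hVU : U⁻¹ = V := Matrix.inv_eq_right_inv hUV
  have hUunit : IsUnit U :=
    (Matrix.isUnit_iff_isUnit_det U).mpr (Matrix.isUnit_det_of_right_inverse hUV)
  have key : s • M = U * Matrix.diagonal ![s*lam, -(s*lam)] * U⁻¹ := by
    rw [hVU]
    ext i j
    fin_cases i <;> fin_cases j <;>
      simp [hM, hU, hV, Matrix.mul_apply, Matrix.vecMul, dotProduct,
        Fin.sum_univ_two, Matrix.diagonal_apply] <;>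
      field_simp <;>
      first
        | ring1
        | linear_combination ((2*s*lam)) * hlamsq
        | linear_combination (-(2*s*lam)) * hlamsq
        | linear_combination (2*s) * hlamsq
  have hdiag : NormedSpace.exp (![s*lam, -(s*lam)] : Fin 2 → ℝ)
      = ![Real.exp (s*lam), Real.exp (-(s*lam))] := by
    funext i
    rw [Pi.coe_exp, ← Real.exp_eq_exp_ℝ]
    fin_cases i <;> rfl
  have hexp : NormedSpace.exp (s • M)
      = U * Matrix.diagonal ![Real.exp (s*lam), Real.exp (-(s*lam))] * V := by
    rw [key, Matrix.exp_conj U _ hUunit, Matrix.exp_diagonal, hdiag, hVU]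
  have hE0 : Real.exp (s*lam) ≠ 0 := Real.exp_ne_zero _
  constructor
  · rw [hexp]
    simp only [hU, hV, Matrix.mul_apply, Matrix.vecMul, dotProduct,
      Fin.sum_univ_two, Matrix.diagonal_apply, Matrix.smul_apply, smul_eq_mul,
      Matrix.cons_val', Matrix.cons_val_zero, Matrix.cons_val_one, Matrix.head_cons,
      Matrix.head_fin_const, Matrix.empty_val', Matrix.cons_val_fin_one]
    norm_num [Matrix.diagonal_apply]
    field_simp
    ring
  · rw [hexp]
    simp only [hU, hV, Matrix.mul_apply, Matrix.vecMul, dotProduct,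
      Fin.sum_univ_two, Matrix.diagonal_apply, Matrix.smul_apply, smul_eq_mul,
      Matrix.cons_val', Matrix.cons_val_zero, Matrix.cons_val_one, Matrix.head_cons,
      Matrix.head_fin_const, Matrix.empty_val', Matrix.cons_val_fin_one]
    norm_num [Matrix.diagonal_apply]
    field_simp
    rw [mul_comm lam s]
    linear_combination (-(Real.exp (s*lam) - Real.exp (-(s*lam)))) * hlamsq

lemma beta_alg (lam a Q E : ℝ) (hE : 0 < E) (h1 : a < lam) (h2 : -lam < a) (hlam : 0 < lam) :
    -((((lam - a) * E + (lam + a) * E⁻¹) / (2 * lam))⁻¹) * -(Q * (E - E⁻¹) / (2 * lam))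
      = Q * (E * E - 1) / ((lam - a) * (E * E) + (lam + a)) := by
  have h1' : 0 < lam - a := by linarith
  have h2' : 0 < lam + a := by linarith
  have hd1 : ((lam - a) * E + (lam + a) * E⁻¹) ≠ 0 := by positivity
  have hd2 : ((lam - a) * (E * E) + (lam + a)) ≠ 0 := by positivity
  have hE0 : E ≠ 0 := ne_of_gt hE
  rw [neg_mul_neg, inv_div, div_mul_div_comm]
  rw [div_eq_div_iff (by positivity) (by positivity)]
  field_simp

/-- for `t ∈ [0,T]` the (2,2) entry of `exp((T−t)𝒜)` is nonzero, and
`−[(exp((T−t)𝒜))₂₂]⁻¹ · (exp((T−t)𝒜))₂₁ = β(t)`. -/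
theorem beta_eq_matrix_exponential_expression (p : P) (hT : 0 < p.T)
    (hQ : 0 < p.Q) (hR : 0 < p.R) (hB : p.B ≠ 0) (t : ℝ) (ht : t ∈ Set.Icc 0 p.T) :
    (NormedSpace.exp
        ((p.T - t) • (!![p.a, -p.B ^ 2 / p.R; -p.Q, -p.a] : Matrix (Fin 2) (Fin 2) ℝ))) 1 1 ≠ 0 ∧
      -((NormedSpace.exp
            ((p.T - t) • (!![p.a, -p.B ^ 2 / p.R; -p.Q, -p.a] :
              Matrix (Fin 2) (Fin 2) ℝ))) 1 1)⁻¹ *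
          (NormedSpace.exp
            ((p.T - t) • (!![p.a, -p.B ^ 2 / p.R; -p.Q, -p.a] :
              Matrix (Fin 2) (Fin 2) ℝ))) 1 0 = p.beta t := by
  classical
  set s : ℝ := p.T - t with hs
  set a : ℝ := p.a with ha
  set lam : ℝ := p.lam with hlamdef
  set b : ℝ := p.B ^ 2 / p.R with hb
  have hbpos : 0 < b := by rw [hb]; positivity
  have hlamsq : lam ^ 2 = a ^ 2 + b * p.Q := by
    rw [hlamdef, P.lam, Real.sq_sqrt (by positivity), ha, hb]; ring
  have hlampos : 0 < lam := by
    rw [hlamdef, P.lam]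
    apply Real.sqrt_pos.mpr
    have h1 : 0 < p.B ^ 2 * p.Q / p.R := by positivity
    nlinarith [sq_nonneg p.a]
  have habs : a ^ 2 < lam ^ 2 := by nlinarith
  have hla : a < lam := by nlinarith
  have hma : -lam < a := by nlinarith
  have hMeq : (!![p.a, -p.B ^ 2 / p.R; -p.Q, -p.a] : Matrix (Fin 2) (Fin 2) ℝ)
      = !![a, -b; -p.Q, -a] := by
    rw [ha, hb]
    congr 1
    rw [neg_div]
  rw [hMeq]
  clear_value s a lam b
  obtain ⟨h11, h10⟩ := exp_entries a lam b p.Q s hbpos hlampos hlamsq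
  have hE : (0:ℝ) < Real.exp (s * lam) := Real.exp_pos _
  have hF : (0:ℝ) < Real.exp (-(s * lam)) := Real.exp_pos _
  have hden1 : 0 < (lam - a) * Real.exp (s*lam) + (lam + a) * Real.exp (-(s*lam)) := by
    have h1 : 0 < lam - a := by linarith
    have h2 : 0 < lam + a := by linarith
    positivity
  have h11ne : (NormedSpace.exp
      (s • (!![a, -b; -p.Q, -a] : Matrix (Fin 2) (Fin 2) ℝ))) 1 1 ≠ 0 := by
    rw [h11]
    positivity
  refine ⟨h11ne, ?_⟩
  rw [h11, h10, P.beta, ← hlamdef, ← ha, ← hs]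
  have hE2 : Real.exp (2 * lam * s) = Real.exp (s*lam) * Real.exp (s*lam) := by
    rw [← Real.exp_add]; ring_nf
  rw [hE2]
  rw [Real.exp_neg] at h11 h10 ⊢
  exact beta_alg lam a p.Q (Real.exp (s*lam)) hE hla hma hlampos

end
end

section
/- Suppose B ≠ 0 and Q > 0. Then β is differentiable on [0,T], satisfies the Riccati equation β′(t) + (2A + σ²)β(t) − (B²/R)β(t)² + Q = 0 for all t ∈ [0,T], and satisfies the terminal condition β(T) = 0. -/
open Real Set

noncomputable section

/-- `β` is differentiable on `[0,T]`, satisfies the Riccati equation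
`β′(t) + (2A + σ²)β(t) − (B²/R)β(t)² + Q = 0` on `[0,T]`, and `β(T) = 0`. -/
theorem beta_solves_riccati (p : P) (hT : 0 < p.T) (hQ : 0 < p.Q) (hR : 0 < p.R)
    (hB : p.B ≠ 0) :
    DifferentiableOn ℝ p.beta (Set.Icc 0 p.T) ∧
      (∀ t ∈ Set.Icc 0 p.T,
        derivWithin p.beta (Set.Icc 0 p.T) t + (2 * p.A + p.sig ^ 2) * p.beta t -
          p.B ^ 2 / p.R * (p.beta t) ^ 2 + p.Q = 0) ∧
      p.beta p.T = 0 := by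
  have hRne : p.R ≠ 0 := ne_of_gt hR
  have hQne : p.Q ≠ 0 := ne_of_gt hQ
  have hB2 : 0 < p.B ^ 2 := by
    rcases lt_or_gt_of_ne hB with h | h
    · nlinarith
    · nlinarith
  have hargnn : 0 ≤ p.a ^ 2 + p.B ^ 2 * p.Q / p.R := by positivity
  have hlam2 : p.lam ^ 2 = p.a ^ 2 + p.B ^ 2 * p.Q / p.R := Real.sq_sqrt hargnn
  have hlamnn : 0 ≤ p.lam := Real.sqrt_nonneg _
  have hgt : p.a ^ 2 < p.lam ^ 2 := by
    rw [hlam2]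
    have : 0 < p.B ^ 2 * p.Q / p.R := by positivity
    linarith
  have hla : p.a < p.lam := by nlinarith
  have hla' : -p.lam < p.a := by nlinarith
  have hden : ∀ t : ℝ, 0 < (p.lam - p.a) * Real.exp (2 * p.lam * (p.T - t)) +
      (p.lam + p.a) := by
    intro t
    have h1 : 0 < p.lam - p.a := by linarith
    have h2 : 0 < p.lam + p.a := by linarith
    have h3 : 0 < Real.exp (2 * p.lam * (p.T - t)) := Real.exp_pos _
    positivity
  -- derivative of the exponential factor
  have hE : ∀ t : ℝ, HasDerivAt (fun s => Real.exp (2 * p.lam * (p.T - s)))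
      (Real.exp (2 * p.lam * (p.T - t)) * (2 * p.lam * -1)) t := by
    intro t
    exact (((hasDerivAt_id t).const_sub p.T).const_mul (2 * p.lam)).exp
  have hbeta : ∀ t : ℝ, HasDerivAt p.beta
      ((p.Q * (Real.exp (2 * p.lam * (p.T - t)) * (2 * p.lam * -1)) *
          ((p.lam - p.a) * Real.exp (2 * p.lam * (p.T - t)) + (p.lam + p.a)) -
        p.Q * (Real.exp (2 * p.lam * (p.T - t)) - 1) *
          ((p.lam - p.a) * (Real.exp (2 * p.lam * (p.T - t)) * (2 * p.lam * -1)))) /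
        ((p.lam - p.a) * Real.exp (2 * p.lam * (p.T - t)) + (p.lam + p.a)) ^ 2) t := by
    intro t
    have hnum : HasDerivAt (fun s => p.Q * (Real.exp (2 * p.lam * (p.T - s)) - 1))
        (p.Q * (Real.exp (2 * p.lam * (p.T - t)) * (2 * p.lam * -1))) t :=
      ((hE t).sub_const 1).const_mul p.Q
    have hd : HasDerivAt (fun s => (p.lam - p.a) * Real.exp (2 * p.lam * (p.T - s)) +
        (p.lam + p.a))
        ((p.lam - p.a) * (Real.exp (2 * p.lam * (p.T - t)) * (2 * p.lam * -1))) t :=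
      ((hE t).const_mul (p.lam - p.a)).add_const (p.lam + p.a)
    exact hnum.div hd (ne_of_gt (hden t))
  have hBR : p.B ^ 2 / p.R = (p.lam ^ 2 - p.a ^ 2) / p.Q := by
    rw [hlam2]; field_simp; ring
  refine ⟨fun t _ => (hbeta t).differentiableAt.differentiableWithinAt, ?_, ?_⟩
  · intro t ht
    rw [(hbeta t).differentiableAt.derivWithin ((uniqueDiffOn_Icc hT) t ht), (hbeta t).deriv]
    have ha : 2 * p.A + p.sig ^ 2 = 2 * p.a := by simp [P.a]; ring
    rw [ha, hBR]
    show _ + 2 * p.a * (p.Q * (Real.exp (2 * p.lam * (p.T - t)) - 1) /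
        ((p.lam - p.a) * Real.exp (2 * p.lam * (p.T - t)) + (p.lam + p.a))) -
      (p.lam ^ 2 - p.a ^ 2) / p.Q * (p.Q * (Real.exp (2 * p.lam * (p.T - t)) - 1) /
        ((p.lam - p.a) * Real.exp (2 * p.lam * (p.T - t)) + (p.lam + p.a))) ^ 2 + p.Q = 0
    have hdne := ne_of_gt (hden t)
    generalize Real.exp (2 * p.lam * (p.T - t)) = E at hdne ⊢
    generalize hd : (p.lam - p.a) * E + (p.lam + p.a) = d at hdne ⊢
    field_simp
    rw [← hd]
    ring
  · show p.Q * (Real.exp (2 * p.lam * (p.T - p.T)) - 1) / _ = 0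
    simp

end
end

section
/- Suppose B ≠ 0 and Q > 0. If g : [0,T] → ℝ is differentiable, satisfies g′(t) + (2A + σ²)g(t) − (B²/R)g(t)² + Q = 0 for all t ∈ [0,T], and g(T) = 0, then g(t) = β(t) for all t ∈ [0,T]; that is, the Riccati equation with zero terminal condition has β as its unique solution. -/
open Real Set

noncomputable section

section RiccatiAux
open Topology Filter

variable (p : P)

lemma lam_sq_eq (hQ : 0 < p.Q) (hR : 0 < p.R) :
    p.lam ^ 2 = p.a ^ 2 + p.B ^ 2 * p.Q / p.R := by
  have h : (0:ℝ) ≤ p.a ^ 2 + p.B ^ 2 * p.Q / p.R := by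
    have h1 : (0:ℝ) ≤ p.B ^ 2 * p.Q / p.R := by positivity
    nlinarith [sq_nonneg p.a]
  rw [P.lam, sq_sqrt h]

lemma abs_a_lt_lam (hQ : 0 < p.Q) (hR : 0 < p.R) (hB : p.B ≠ 0) : |p.a| < p.lam := by
  have hc : (0:ℝ) < p.B ^ 2 * p.Q / p.R := by positivity
  have h1 : |p.a| = Real.sqrt (p.a ^ 2) := (Real.sqrt_sq_eq_abs p.a).symm
  rw [h1, P.lam]
  apply Real.sqrt_lt_sqrt (sq_nonneg _)
  linarith

lemma denom_pos (hQ : 0 < p.Q) (hR : 0 < p.R) (hB : p.B ≠ 0) (t : ℝ) :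
    0 < (p.lam - p.a) * Real.exp (2 * p.lam * (p.T - t)) + (p.lam + p.a) := by
  have h := abs_a_lt_lam p hQ hR hB
  have h1 : 0 < p.lam - p.a := by
    have := neg_abs_le p.a; have := le_abs_self p.a; linarith
  have h2 : 0 < p.lam + p.a := by
    have := neg_abs_le p.a; linarith
  positivity

lemma beta_hasDerivAt (hQ : 0 < p.Q) (hR : 0 < p.R) (hB : p.B ≠ 0) (t : ℝ) :
    HasDerivAt p.beta
      (p.B ^ 2 / p.R * (p.beta t) ^ 2 - (2 * p.A + p.sig ^ 2) * p.beta t - p.Q) t := by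
  have hden := denom_pos p hQ hR hB
  set E : ℝ → ℝ := fun s => Real.exp (2 * p.lam * (p.T - s)) with hE
  have hEd : HasDerivAt E (-(2 * p.lam) * E t) t := by
    have h1 : HasDerivAt (fun s : ℝ => 2 * p.lam * (p.T - s)) (2 * p.lam * (-1)) t :=
      ((hasDerivAt_id t).const_sub p.T).const_mul (2 * p.lam)
    have := h1.exp
    simpa [hE, mul_comm] using this
  have hnum : HasDerivAt (fun s => p.Q * (E s - 1)) (p.Q * (-(2 * p.lam) * E t)) t :=
    (hEd.sub_const 1).const_mul p.Q
  have hdenD : HasDerivAt (fun s => (p.lam - p.a) * E s + (p.lam + p.a))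
      ((p.lam - p.a) * (-(2 * p.lam) * E t)) t :=
    (hEd.const_mul (p.lam - p.a)).add_const (p.lam + p.a)
  have hne : (p.lam - p.a) * E t + (p.lam + p.a) ≠ 0 := (hden t).ne'
  have hdiv := hnum.fun_div hdenD hne
  have hbe : p.beta = fun s => p.Q * (E s - 1) / ((p.lam - p.a) * E s + (p.lam + p.a)) := by
    funext s; rfl
  rw [← hbe] at hdiv
  refine hdiv.congr_deriv ?_; symm
  have hkey : p.lam ^ 2 = p.a ^ 2 + p.B ^ 2 * p.Q / p.R := lam_sq_eq p hQ hR
  have hbev : p.beta t = p.Q * (E t - 1) / ((p.lam - p.a) * E t + (p.lam + p.a)) := rfl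
  have h2a : 2 * p.A + p.sig ^ 2 = 2 * p.a := by simp [P.a]; ring
  rw [hbev, h2a]
  have hRne : p.R ≠ 0 := hR.ne'
  rw [eq_div_iff (pow_ne_zero 2 hne)]
  have hy : p.Q * (E t - 1) / ((p.lam - p.a) * E t + (p.lam + p.a)) *
      ((p.lam - p.a) * E t + (p.lam + p.a)) = p.Q * (E t - 1) := div_mul_cancel₀ _ hne
  linear_combination (p.B ^ 2 / p.R * (p.Q * (E t - 1) / ((p.lam - p.a) * E t + (p.lam + p.a)) *
      ((p.lam - p.a) * E t + (p.lam + p.a)) + p.Q * (E t - 1)) -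
      2 * p.a * ((p.lam - p.a) * E t + (p.lam + p.a))) * hy - (p.Q * (E t - 1) ^ 2) * hkey

lemma beta_continuous (hQ : 0 < p.Q) (hR : 0 < p.R) (hB : p.B ≠ 0) :
    Continuous p.beta := by
  rw [continuous_iff_continuousAt]
  exact fun t => (beta_hasDerivAt p hQ hR hB t).continuousAt

lemma beta_term : p.beta p.T = 0 := by
  simp [P.beta]

end RiccatiAux

/-- the Riccati equation with zero terminal condition has `β` as its unique
solution on `[0,T]`. -/
theorem riccati_solution_unique (p : P) (hT : 0 < p.T) (hQ : 0 < p.Q) (hR : 0 < p.R)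
    (hB : p.B ≠ 0) (g : ℝ → ℝ) (hg : DifferentiableOn ℝ g (Set.Icc 0 p.T))
    (hode : ∀ t ∈ Set.Icc 0 p.T,
      derivWithin g (Set.Icc 0 p.T) t + (2 * p.A + p.sig ^ 2) * g t -
        p.B ^ 2 / p.R * (g t) ^ 2 + p.Q = 0)
    (hterm : g p.T = 0) :
    ∀ t ∈ Set.Icc 0 p.T, g t = p.beta t := by
  -- the vector field
  set v : ℝ → ℝ → ℝ := fun _ x => p.B ^ 2 / p.R * x ^ 2 - (2 * p.A + p.sig ^ 2) * x - p.Q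
    with hv_def
  have hβc : Continuous p.beta := beta_continuous p hQ hR hB
  obtain ⟨M1, hM1⟩ := (isCompact_Icc : IsCompact (Set.Icc (0:ℝ) p.T)).exists_bound_of_continuousOn
    hg.continuousOn
  obtain ⟨M2, hM2⟩ := (isCompact_Icc : IsCompact (Set.Icc (0:ℝ) p.T)).exists_bound_of_continuousOn
    hβc.continuousOn
  set M : ℝ := max M1 M2 with hM_def
  set Kr : ℝ := |p.B ^ 2 / p.R| * (2 * M) + |2 * p.A + p.sig ^ 2| with hKr_def
  set K : NNReal := Real.toNNReal Kr with hK_def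
  have hM0 : 0 ≤ M := by
    have := hM1 0 (Set.mem_Icc.mpr ⟨le_refl 0, hT.le⟩)
    have h0 : (0:ℝ) ≤ M1 := le_trans (norm_nonneg _) this
    exact le_trans h0 (le_max_left _ _)
  have hKrK : Kr ≤ (K : ℝ) := Real.le_coe_toNNReal Kr
  have hlip : ∀ t : ℝ, LipschitzOnWith K (v t) (Metric.closedBall (0:ℝ) M) := by
    intro t
    apply LipschitzOnWith.of_dist_le_mul
    intro x hx y hy
    rw [Real.dist_eq, Real.dist_eq]
    rw [Metric.mem_closedBall, Real.dist_eq, sub_zero] at hx hy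
    have hfac : v t x - v t y =
        (p.B ^ 2 / p.R * (x + y) - (2 * p.A + p.sig ^ 2)) * (x - y) := by
      simp only [hv_def]; ring
    rw [hfac, abs_mul]
    have hb1 : |p.B ^ 2 / p.R * (x + y) - (2 * p.A + p.sig ^ 2)| ≤ Kr := by
      calc |p.B ^ 2 / p.R * (x + y) - (2 * p.A + p.sig ^ 2)|
          ≤ |p.B ^ 2 / p.R * (x + y)| + |2 * p.A + p.sig ^ 2| := abs_sub _ _
        _ ≤ |p.B ^ 2 / p.R| * (2 * M) + |2 * p.A + p.sig ^ 2| := by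
            rw [abs_mul]
            have : |x + y| ≤ 2 * M := by
              calc |x + y| ≤ |x| + |y| := abs_add_le _ _
                _ ≤ 2 * M := by linarith
            have h2 := abs_nonneg (p.B ^ 2 / p.R)
            nlinarith [abs_nonneg (x + y)]
    have := mul_le_mul_of_nonneg_right (hb1.trans hKrK) (abs_nonneg (x - y))
    linarith
  have hgc : ContinuousOn g (Set.Icc 0 p.T) := hg.continuousOn
  have hgs : ∀ t ∈ Set.Ioc (0:ℝ) p.T, g t ∈ Metric.closedBall (0:ℝ) M := by
    intro t ht
    rw [Metric.mem_closedBall, Real.dist_eq, sub_zero]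
    exact le_trans (hM1 t ⟨ht.1.le, ht.2⟩) (le_max_left _ _)
  have hβs : ∀ t ∈ Set.Ioc (0:ℝ) p.T, p.beta t ∈ Metric.closedBall (0:ℝ) M := by
    intro t ht
    rw [Metric.mem_closedBall, Real.dist_eq, sub_zero]
    exact le_trans (hM2 t ⟨ht.1.le, ht.2⟩) (le_max_right _ _)
  have hg' : ∀ t ∈ Set.Ioc (0:ℝ) p.T, HasDerivWithinAt g (v t (g t)) (Set.Iic t) t := by
    intro t ht
    have htI : t ∈ Set.Icc (0:ℝ) p.T := ⟨ht.1.le, ht.2⟩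
    have hd := (hg t htI).hasDerivWithinAt
    have hval : derivWithin g (Set.Icc 0 p.T) t = v t (g t) := by
      have := hode t htI
      simp only [hv_def]
      linarith
    rw [hval] at hd
    apply hd.mono_of_mem_nhdsWithin
    have h1 : Set.Ioi (0:ℝ) ∈ nhds t := isOpen_Ioi.mem_nhds ht.1
    refine Filter.mem_of_superset
      (Filter.inter_mem (mem_nhdsWithin_of_mem_nhds h1) self_mem_nhdsWithin) ?_
    intro x hx
    exact ⟨hx.1.le, le_trans hx.2 ht.2⟩
  have hβ' : ∀ t ∈ Set.Ioc (0:ℝ) p.T, HasDerivWithinAt p.beta (v t (p.beta t)) (Set.Iic t) t :=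
    fun t _ => (beta_hasDerivAt p hQ hR hB t).hasDerivWithinAt
  have hb : g p.T = p.beta p.T := by rw [hterm, beta_term]
  have := ODE_solution_unique_of_mem_Icc_left (fun t _ => hlip t) hgc hg' hgs
    (hβc.continuousOn) hβ' hβs hb
  exact fun t ht => this ht

end
end

section
/- Suppose B ≠ 0 and Q > 0. Then β′(t) < 0 for all t ∈ [0,T], and for all t ∈ [0,T] one has 0 ≤ β(t) ≤ β(0) < Q + (R/B²)(1 + a²). -/
open Real Set

noncomputable section

/-- `β′(t) < 0` on `[0,T]`, and `0 ≤ β(t) ≤ β(0) < Q + (R/B²)(1 + a²)`. -/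
theorem beta_decreasing_and_bounded (p : P) (hT : 0 < p.T) (hQ : 0 < p.Q) (hR : 0 < p.R)
    (hB : p.B ≠ 0) :
    (∀ t ∈ Set.Icc 0 p.T, derivWithin p.beta (Set.Icc 0 p.T) t < 0) ∧
      (∀ t ∈ Set.Icc 0 p.T, 0 ≤ p.beta t ∧ p.beta t ≤ p.beta 0) ∧
      p.beta 0 < p.Q + p.R / p.B ^ 2 * (1 + p.a ^ 2) := by
  have hB2 : 0 < p.B ^ 2 := by positivity
  have hmQ : 0 < p.B ^ 2 * p.Q / p.R := by positivity
  have hlam_sq : p.lam ^ 2 = p.a ^ 2 + p.B ^ 2 * p.Q / p.R := by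
    rw [P.lam, sq_sqrt]; positivity
  have habs : |p.a| < p.lam := by
    calc |p.a| = Real.sqrt (p.a ^ 2) := (Real.sqrt_sq_eq_abs _).symm
    _ < Real.sqrt (p.a ^ 2 + p.B ^ 2 * p.Q / p.R) := by
        apply Real.sqrt_lt_sqrt (sq_nonneg _); linarith
    _ = p.lam := rfl
  have hlam_pos : 0 < p.lam := lt_of_le_of_lt (abs_nonneg _) habs
  have hla1 : 0 < p.lam - p.a := by
    have := (abs_lt.mp habs).2; linarith
  have hla2 : 0 < p.lam + p.a := by
    have := (abs_lt.mp habs).1; linarith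
  set E : ℝ → ℝ := fun t => Real.exp (2 * p.lam * (p.T - t)) with hEdef
  set D : ℝ → ℝ := fun t => (p.lam - p.a) * E t + (p.lam + p.a) with hDdef
  have hEpos : ∀ t, 0 < E t := fun t => Real.exp_pos _
  have hDpos : ∀ t, 0 < D t := fun t =>
    add_pos (mul_pos hla1 (hEpos t)) hla2
  have hbeta_eq : ∀ t, p.beta t = p.Q * (E t - 1) / D t := fun t => rfl
  -- derivative of E
  have hE : ∀ t : ℝ, HasDerivAt E (E t * (-(2 * p.lam))) t := by
    intro t
    have h1 : HasDerivAt (fun t : ℝ => 2 * p.lam * (p.T - t)) (-(2 * p.lam)) t := by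
      have h0 : HasDerivAt (fun t : ℝ => p.T - t) (-1) t := by
        simpa using (hasDerivAt_id t).const_sub p.T
      simpa [mul_comm] using h0.const_mul (2 * p.lam)
    simpa using h1.exp
  have hN : ∀ t : ℝ, HasDerivAt (fun t => p.Q * (E t - 1)) (p.Q * (E t * (-(2 * p.lam)))) t := by
    intro t
    exact ((hE t).sub_const 1).const_mul p.Q
  have hDd : ∀ t : ℝ, HasDerivAt D ((p.lam - p.a) * (E t * (-(2 * p.lam)))) t := by
    intro t
    exact (((hE t).const_mul (p.lam - p.a)).add_const (p.lam + p.a))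
  have hdiv : ∀ t : ℝ, HasDerivAt p.beta
      ((p.Q * (E t * (-(2 * p.lam))) * D t -
        p.Q * (E t - 1) * ((p.lam - p.a) * (E t * (-(2 * p.lam))))) / (D t) ^ 2) t := by
    intro t
    exact (hN t).div (hDd t) (ne_of_gt (hDpos t))
  have hnum : ∀ t : ℝ,
      p.Q * (E t * (-(2 * p.lam))) * D t -
        p.Q * (E t - 1) * ((p.lam - p.a) * (E t * (-(2 * p.lam)))) =
        -(4 * p.lam ^ 2 * p.Q * E t) := by
    intro t; simp only [hDdef]; ring
  have hderiv_neg : ∀ t : ℝ, deriv p.beta t < 0 := by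
    intro t
    rw [(hdiv t).deriv, hnum t]
    apply div_neg_of_neg_of_pos
    · have hl2 : 0 < p.lam ^ 2 := pow_pos hlam_pos 2
      have h4 : 0 < 4 * p.lam ^ 2 * p.Q * E t :=
        mul_pos (mul_pos (by linarith) hQ) (hEpos t)
      linarith
    · exact pow_pos (hDpos t) 2
  have hanti : StrictAnti p.beta := strictAnti_of_deriv_neg hderiv_neg
  have hbetaT : p.beta p.T = 0 := by
    rw [hbeta_eq]; simp [hEdef]
  refine ⟨?_, ?_, ?_⟩
  · intro t ht
    rw [((hdiv t).hasDerivWithinAt).derivWithin ((uniqueDiffOn_Icc hT) t ht)]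
    rw [hnum t]
    apply div_neg_of_neg_of_pos
    · have hl2 : 0 < p.lam ^ 2 := pow_pos hlam_pos 2
      have h4 : 0 < 4 * p.lam ^ 2 * p.Q * E t :=
        mul_pos (mul_pos (by linarith) hQ) (hEpos t)
      linarith
    · exact pow_pos (hDpos t) 2
  · intro t ht
    constructor
    · have := hanti.antitone ht.2
      rw [hbetaT] at this; exact this
    · exact hanti.antitone ht.1
  · have hkey : p.lam + p.a < p.B ^ 2 * p.Q / p.R + 1 + p.a ^ 2 := by
      nlinarith [sq_nonneg (p.lam - 1), sq_nonneg (p.a - 1)]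
    have hstep1 : p.beta 0 ≤ p.Q / (p.lam - p.a) := by
      rw [hbeta_eq]
      have h1 : p.Q * (E 0 - 1) ≤ p.Q * E 0 := by nlinarith [hEpos 0]
      have h2 : (p.lam - p.a) * E 0 ≤ D 0 := by
        simp only [hDdef]; linarith
      have h3 : 0 < (p.lam - p.a) * E 0 := mul_pos hla1 (hEpos 0)
      calc p.Q * (E 0 - 1) / D 0 ≤ p.Q * E 0 / ((p.lam - p.a) * E 0) := by
            apply div_le_div₀ (by positivity) h1 h3 h2
      _ = p.Q / (p.lam - p.a) := by
            have hE0 : E 0 ≠ 0 := ne_of_gt (hEpos 0)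
            field_simp
    have hstep2 : p.Q / (p.lam - p.a) < p.Q + p.R / p.B ^ 2 * (1 + p.a ^ 2) := by
      rw [div_lt_iff₀ hla1]
      have hQeq : p.Q = p.R / p.B ^ 2 * (p.lam ^ 2 - p.a ^ 2) := by
        field_simp [hlam_sq]
        have hR' : p.R * (p.B ^ 2 * p.Q / p.R) = p.B ^ 2 * p.Q := by field_simp
        linear_combination -(p.R * hlam_sq) - hR'
      have hRB : 0 < p.R / p.B ^ 2 := by positivity
      nlinarith [mul_pos hRB (mul_pos hla1 (sub_pos.mpr hkey))]
    linarith

end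
end

section
/- Suppose B ≠ 0 and Q > 0. Then ξ(0) = ∫₀ᵀ e^{2Cv} (Bα(v) − D)²/R dv ≥ 0, and consequently 1 + ξ(0)N₀ ≥ 1 > 0 for every N₀ ≥ 0. -/
open Real Set

noncomputable section

/-- `ξ(0) = ∫₀ᵀ e^{2Cv} (Bα(v) − D)²/R dv ≥ 0`, and consequently
`1 + ξ(0)N₀ ≥ 1 > 0` for every `N₀ ≥ 0`. -/
theorem xi_zero_nonneg (p : P) (hT : 0 < p.T) (hQ : 0 < p.Q) (hR : 0 < p.R)
    (hB : p.B ≠ 0) :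
    p.xi 0 = (∫ v in (0 : ℝ)..p.T, Real.exp (2 * p.C * v) * (p.B * p.alpha v - p.D) ^ 2 / p.R) ∧
      0 ≤ p.xi 0 ∧
      ∀ N0' : ℝ, 0 ≤ N0' → 1 ≤ 1 + p.xi 0 * N0' := by
  have heq : p.xi 0 =
      ∫ v in (0 : ℝ)..p.T, Real.exp (2 * p.C * v) * (p.B * p.alpha v - p.D) ^ 2 / p.R := by
    unfold P.xi P.zeta
    apply intervalIntegral.integral_congr
    intro v _
    have hR' : p.R ≠ 0 := ne_of_gt hR
    field_simp
    ring
  have hnn : 0 ≤ p.xi 0 := by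
    rw [heq]
    apply intervalIntegral.integral_nonneg hT.le
    intro v _
    positivity
  exact ⟨heq, hnn, fun N0' hN => le_add_of_nonneg_right (mul_nonneg hnn hN)⟩

end
end

section
/- Suppose B ≠ 0 and Q > 0. Then sup_{t ∈ [0,T]} |α(t)| ≤ [|K| + T(|BD|Q/R + (|D|/|B|)(1 + a²) + |H|)] · exp([1 + |A| + a² + |C| + B²Q/R]·T), and the same bound holds for sup_{t ∈ [0,T]} |ζ(t)| where ζ := −α. -/
open Real Set

noncomputable section

set_option maxHeartbeats 1000000 in
/-- a uniform bound for `α` (and hence for `ζ = −α`) on `[0,T]`. -/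
theorem alpha_sup_bound (p : P) (hT : 0 < p.T) (hQ : 0 < p.Q) (hR : 0 < p.R)
    (hB : p.B ≠ 0) :
    sSup ((fun t => |p.alpha t|) '' Set.Icc 0 p.T) ≤
        (|p.K| + p.T * (|p.B * p.D| * p.Q / p.R + |p.D| / |p.B| * (1 + p.a ^ 2) + |p.H|)) *
          Real.exp ((1 + |p.A| + p.a ^ 2 + |p.C| + p.B ^ 2 * p.Q / p.R) * p.T) ∧
      sSup ((fun t => |p.zeta t|) '' Set.Icc 0 p.T) ≤
        (|p.K| + p.T * (|p.B * p.D| * p.Q / p.R + |p.D| / |p.B| * (1 + p.a ^ 2) + |p.H|)) *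
          Real.exp ((1 + |p.A| + p.a ^ 2 + |p.C| + p.B ^ 2 * p.Q / p.R) * p.T) := by
  have hB2 : 0 < p.B ^ 2 := by positivity
  have hm : 0 < p.B ^ 2 * p.Q / p.R := by positivity
  set m := p.B ^ 2 * p.Q / p.R with hmdef
  have hlam2 : p.lam ^ 2 = p.a ^ 2 + m := by
    rw [P.lam, Real.sq_sqrt]; nlinarith [sq_nonneg p.a]
  have hlam0 : 0 < p.lam := Real.sqrt_pos.2 (by nlinarith [sq_nonneg p.a])
  have hla : 0 < p.lam - p.a := by nlinarith
  have hla' : 0 < p.lam + p.a := by nlinarith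
  -- bounds on beta
  have hbeta : ∀ t, t ≤ p.T → 0 ≤ p.beta t ∧ p.beta t ≤ p.Q / (p.lam - p.a) := by
    intro t ht
    have hE1 : 1 ≤ Real.exp (2 * p.lam * (p.T - t)) :=
      Real.one_le_exp (by nlinarith)
    simp only [P.beta]
    set E := Real.exp (2 * p.lam * (p.T - t)) with hE
    have hD : 0 < (p.lam - p.a) * E + (p.lam + p.a) := by nlinarith
    constructor
    · exact div_nonneg (by nlinarith) hD.le
    · rw [div_le_div_iff₀ hD hla]
      nlinarith [mul_pos hQ hlam0]
  have hbb : ∀ t, t ≤ p.T → p.B ^ 2 / p.R * p.beta t ≤ p.lam + p.a := by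
    intro t ht
    have h1 := (hbeta t ht).2
    have h2 : p.B ^ 2 / p.R * (p.Q / (p.lam - p.a)) = p.lam + p.a := by
      have hmm : (p.lam - p.a) * (p.lam + p.a) = m := by nlinarith
      rw [hmdef] at hmm
      have hmm2 : (p.lam - p.a) * (p.lam + p.a) * p.R = p.B ^ 2 * p.Q := by
        field_simp at hmm; linarith [hmm]
      field_simp
      nlinarith [hmm2]
    calc p.B ^ 2 / p.R * p.beta t ≤ p.B ^ 2 / p.R * (p.Q / (p.lam - p.a)) := by
          exact mul_le_mul_of_nonneg_left h1 (by positivity)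
      _ = p.lam + p.a := h2
  have hlamb : p.lam + p.a ≤ 1 + p.a ^ 2 + m := by
    nlinarith [sq_nonneg (p.lam - 1), sq_nonneg (p.a - 1)]
  set MA := 1 + |p.A| + p.a ^ 2 + m with hMAdef
  have hMA0 : 0 ≤ MA := by
    have := abs_nonneg p.A; have := sq_nonneg p.a; rw [hMAdef]; linarith
  have hAAle : ∀ r, r ≤ p.T → p.AA r ≤ MA := by
    intro r hr
    have hb0 := (hbeta r hr).1
    have hx : 0 ≤ p.B ^ 2 / p.R * p.beta r := mul_nonneg (by positivity) hb0
    have := le_abs_self p.A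
    simp only [P.AA]
    rw [hMAdef]
    nlinarith [sq_nonneg p.a]
  -- continuity of AA
  have hcont : Continuous p.AA := by
    have hd : ∀ t : ℝ,
        (p.lam - p.a) * Real.exp (2 * p.lam * (p.T - t)) + (p.lam + p.a) ≠ 0 := by
      intro t
      have := Real.exp_pos (2 * p.lam * (p.T - t))
      nlinarith
    have hcb : Continuous (fun t => p.Q * (Real.exp (2 * p.lam * (p.T - t)) - 1) /
        ((p.lam - p.a) * Real.exp (2 * p.lam * (p.T - t)) + (p.lam + p.a))) :=
      Continuous.div (by continuity) (by continuity) hd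
    have hcb' : Continuous p.beta := hcb
    have : Continuous (fun t => p.A - p.B ^ 2 / p.R * p.beta t) :=
      continuous_const.sub (continuous_const.mul hcb')
    exact this
  -- Gam bound
  have hGam : ∀ t v, 0 ≤ t → t ≤ v → v ≤ p.T → p.Gam t v ≤ Real.exp (MA * p.T) := by
    intro t v ht0 htv hvT
    rw [P.Gam]
    apply Real.exp_le_exp.2
    calc ∫ r in t..v, p.AA r ≤ ∫ _r in t..v, MA := by
          apply intervalIntegral.integral_mono_on htv
            (hcont.intervalIntegrable _ _) intervalIntegrable_const
          intro r hr; exact hAAle r (hr.2.trans hvT)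
      _ = (v - t) * MA := by rw [intervalIntegral.integral_const, smul_eq_mul]
      _ ≤ MA * p.T := by nlinarith
  set Mth := |p.B * p.D| * p.Q / p.R + |p.D| / |p.B| * (1 + p.a ^ 2) + |p.H| with hMthdef
  have habsB : (0 : ℝ) < |p.B| := abs_pos.2 hB
  have hMth0 : 0 ≤ Mth := by
    have h1 : 0 ≤ |p.B * p.D| * p.Q / p.R := by positivity
    have h2 : 0 ≤ |p.D| / |p.B| * (1 + p.a ^ 2) := by positivity
    have := abs_nonneg p.H
    rw [hMthdef]; linarith
  -- Th6 bound
  have hTh6 : ∀ v, v ≤ p.T → |p.Th6 v| ≤ Mth := by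
    intro v hv
    have hb0 := (hbeta v hv).1
    have hbb' := (hbb v hv).trans hlamb
    have key : |p.B * p.D / p.R| * p.beta v ≤
        |p.B * p.D| * p.Q / p.R + |p.D| / |p.B| * (1 + p.a ^ 2) := by
      have e1 : |p.B * p.D| / p.R = |p.D| / |p.B| * (p.B ^ 2 / p.R) := by
        rw [abs_mul]; field_simp; linear_combination |p.D| * sq_abs p.B
      have e2 : |p.D| / |p.B| * m = |p.B * p.D| * p.Q / p.R := by
        rw [hmdef, abs_mul]; field_simp; linear_combination (-(|p.D|)) * sq_abs p.B
      have hdB : 0 ≤ |p.D| / |p.B| := by positivity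
      calc |p.B * p.D / p.R| * p.beta v
          = |p.D| / |p.B| * (p.B ^ 2 / p.R * p.beta v) := by
            rw [abs_div, abs_of_pos hR, e1, mul_assoc]
        _ ≤ |p.D| / |p.B| * (1 + p.a ^ 2 + m) := by
            exact mul_le_mul_of_nonneg_left hbb' hdB
        _ = |p.D| / |p.B| * (1 + p.a ^ 2) + |p.D| / |p.B| * m := by ring
        _ ≤ |p.B * p.D| * p.Q / p.R + |p.D| / |p.B| * (1 + p.a ^ 2) := by
            rw [e2]; linarith
    simp only [P.Th6]
    calc |p.B * p.D / p.R * p.beta v - p.H|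
        ≤ |p.B * p.D / p.R * p.beta v| + |p.H| := abs_sub _ _
      _ = |p.B * p.D / p.R| * p.beta v + |p.H| := by
          rw [abs_mul, abs_of_nonneg hb0]
      _ ≤ Mth := by rw [hMthdef]; linarith
  -- pointwise bound for alpha
  set RHS := (|p.K| + p.T * Mth) * Real.exp ((|p.C| + MA) * p.T) with hRHSdef
  have hptw : ∀ t ∈ Set.Icc 0 p.T, |p.alpha t| ≤ RHS := by
    rintro t ⟨ht0, htT⟩
    have hexpC : ∀ v, t ≤ v → v ≤ p.T → Real.exp (p.C * (v - t)) ≤ Real.exp (|p.C| * p.T) := by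
      intro v htv hvT
      apply Real.exp_le_exp.2
      nlinarith [le_abs_self p.C, abs_nonneg p.C,
        mul_nonneg (abs_nonneg p.C) ht0,
        mul_nonneg (sub_nonneg.2 (le_abs_self p.C)) (sub_nonneg.2 htv)]
    have hGpos : ∀ s v : ℝ, 0 < p.Gam s v := fun s v => Real.exp_pos _
    have h1 : |-p.K * Real.exp (p.C * (p.T - t)) * p.Gam t p.T| ≤
        |p.K| * (Real.exp (|p.C| * p.T) * Real.exp (MA * p.T)) := by
      rw [abs_mul, abs_mul, abs_neg, abs_of_pos (Real.exp_pos _),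
        abs_of_pos (hGpos t p.T), mul_assoc]
      apply mul_le_mul_of_nonneg_left _ (abs_nonneg p.K)
      exact mul_le_mul (hexpC p.T htT le_rfl) (hGam t p.T ht0 htT le_rfl)
        (hGpos t p.T).le (Real.exp_pos _).le
    have h2 : |∫ v in t..p.T, Real.exp (p.C * (v - t)) * p.Gam t v * p.Th6 v| ≤
        Real.exp (|p.C| * p.T) * Real.exp (MA * p.T) * Mth * |p.T - t| := by
      rw [← Real.norm_eq_abs]
      apply intervalIntegral.norm_integral_le_of_norm_le_const
      intro v hv
      rw [Set.uIoc_of_le htT] at hv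
      obtain ⟨hv1, hv2⟩ := hv
      have hb1 := hexpC v hv1.le hv2
      have hb2 := hGam t v ht0 hv1.le hv2
      have hb3 := hTh6 v hv2
      rw [Real.norm_eq_abs, abs_mul, abs_mul, abs_of_pos (Real.exp_pos _),
        abs_of_pos (hGpos t v)]
      apply mul_le_mul _ hb3 (abs_nonneg _) (by positivity)
      exact mul_le_mul hb1 hb2 (hGpos t v).le (Real.exp_pos _).le
    have hTt : |p.T - t| ≤ p.T := by rw [abs_of_nonneg (by linarith)]; linarith
    have hEe : Real.exp (|p.C| * p.T) * Real.exp (MA * p.T) =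
        Real.exp ((|p.C| + MA) * p.T) := by rw [← Real.exp_add]; ring_nf
    have hEpos : (0 : ℝ) < Real.exp ((|p.C| + MA) * p.T) := Real.exp_pos _
    calc |p.alpha t| ≤ |-p.K * Real.exp (p.C * (p.T - t)) * p.Gam t p.T| +
          |∫ v in t..p.T, Real.exp (p.C * (v - t)) * p.Gam t v * p.Th6 v| := by
          rw [P.alpha]; exact abs_add_le _ _
      _ ≤ |p.K| * Real.exp ((|p.C| + MA) * p.T) +
          Real.exp ((|p.C| + MA) * p.T) * Mth * |p.T - t| := by
          rw [← hEe]; exact add_le_add h1 h2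
      _ ≤ RHS := by
          rw [hRHSdef]
          have : Real.exp ((|p.C| + MA) * p.T) * Mth * |p.T - t| ≤
              Real.exp ((|p.C| + MA) * p.T) * Mth * p.T :=
            mul_le_mul_of_nonneg_left hTt (by positivity)
          nlinarith [this]
  have hRHSeq : RHS = (|p.K| + p.T * (|p.B * p.D| * p.Q / p.R +
      |p.D| / |p.B| * (1 + p.a ^ 2) + |p.H|)) *
        Real.exp ((1 + |p.A| + p.a ^ 2 + |p.C| + p.B ^ 2 * p.Q / p.R) * p.T) := by
    rw [hRHSdef, hMthdef, hMAdef, hmdef]; ring_nf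
  have hRHS0 : 0 ≤ RHS := by
    rw [hRHSdef]
    apply mul_nonneg _ (Real.exp_pos _).le
    have := abs_nonneg p.K
    nlinarith [mul_nonneg hT.le hMth0]
  rw [← hRHSeq]
  constructor
  · apply Real.sSup_le _ hRHS0
    rintro x ⟨t, ht, rfl⟩
    exact hptw t ht
  · apply Real.sSup_le _ hRHS0
    rintro x ⟨t, ht, rfl⟩
    simp only [P.zeta, abs_neg]
    exact hptw t ht

end
end

section
/- Suppose B ≠ 0 and Q > 0, and let x̄ : [0,T] → ℝ be continuous. Then γ := γ[x̄] is differentiable on [0,T], satisfies γ′(t) + 𝔸(t)γ(t) + Θ₃(t)x̄(t) − Qη = 0 for all t ∈ [0,T], and satisfies the terminal condition γ(T) = 0. -/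
open Real Set

noncomputable section

/-- for continuous `x̄`, `γ = γ[x̄]` is differentiable on `[0,T]`, satisfies
`γ′(t) + 𝔸(t)γ(t) + Θ₃(t)x̄(t) − Qη = 0` on `[0,T]`, and `γ(T) = 0`. -/
theorem gam_solves_ode (p : P) (hT : 0 < p.T) (hQ : 0 < p.Q) (hR : 0 < p.R)
    (hB : p.B ≠ 0) (xb : ℝ → ℝ) (hxb : ContinuousOn xb (Set.Icc 0 p.T)) :
    DifferentiableOn ℝ (p.gam xb) (Set.Icc 0 p.T) ∧
      (∀ t ∈ Set.Icc 0 p.T,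
        derivWithin (p.gam xb) (Set.Icc 0 p.T) t + p.AA t * p.gam xb t +
          p.Th3 t * xb t - p.Q * p.eta = 0) ∧
      p.gam xb p.T = 0 := by
  have hc : 0 < p.B ^ 2 * p.Q / p.R := by positivity
  have hlam : |p.a| < p.lam := by
    rw [← Real.sqrt_sq_eq_abs]
    unfold P.lam
    exact Real.sqrt_lt_sqrt (sq_nonneg _) (by linarith)
  have ha1 : p.a < p.lam := lt_of_le_of_lt (le_abs_self _) hlam
  have ha2 : -p.a < p.lam := lt_of_le_of_lt (neg_le_abs _) hlam
  have hden : ∀ t : ℝ, 0 < (p.lam - p.a) * Real.exp (2 * p.lam * (p.T - t)) + (p.lam + p.a) :=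
    fun t => add_pos (mul_pos (by linarith) (Real.exp_pos _)) (by linarith)
  have hbeta : Continuous p.beta := by
    unfold P.beta
    exact Continuous.div (by fun_prop) (by fun_prop) fun t => (hden t).ne'
  have hAA : Continuous p.AA := by unfold P.AA; fun_prop
  have hTh3 : Continuous p.Th3 := by unfold P.Th3; fun_prop
  set xt : ℝ → ℝ := fun t => xb (max 0 (min t p.T)) with hxtdef
  have hxtc : Continuous xt := hxb.comp_continuous (by fun_prop) fun x =>
    ⟨le_max_left _ _, max_le hT.le (min_le_right _ _)⟩
  have hxteq : ∀ t ∈ Icc (0:ℝ) p.T, xt t = xb t := by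
    intro t ht
    simp only [hxtdef]
    rw [min_eq_left ht.2, max_eq_right ht.1]
  set I : ℝ → ℝ := fun t => ∫ r in (0:ℝ)..t, p.AA r with hIdef
  have hIint : ∀ a b : ℝ, IntervalIntegrable p.AA MeasureTheory.volume a b := fun a b =>
    hAA.intervalIntegrable a b
  have hIderiv : ∀ t, HasDerivAt I (p.AA t) t := fun t =>
    intervalIntegral.integral_hasDerivAt_right (hIint 0 t)
      (hAA.stronglyMeasurableAtFilter _ _) hAA.continuousAt
  have hIcont : Continuous I := by
    rw [continuous_iff_continuousAt]; exact fun t => (hIderiv t).continuousAt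
  set f : ℝ → ℝ := fun v => p.Th3 v * xt v - p.Q * p.eta with hfdef
  have hf : Continuous f := by rw [hfdef]; exact (hTh3.mul hxtc).sub continuous_const
  set h : ℝ → ℝ := fun v => Real.exp (I v) * f v with hhdef
  have hh : Continuous h := (Real.continuous_exp.comp hIcont).mul hf
  set J : ℝ → ℝ := fun t => -∫ v in p.T..t, h v with hJdef
  have hJderiv : ∀ t, HasDerivAt J (-(h t)) t := fun t =>
    (intervalIntegral.integral_hasDerivAt_right (hh.intervalIntegrable _ _)
      (hh.stronglyMeasurableAtFilter _ _) hh.continuousAt).neg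
  set g : ℝ → ℝ := fun t => Real.exp (-I t) * J t with hgdef
  have hgderiv : ∀ t, HasDerivAt g
      (Real.exp (-I t) * -p.AA t * J t + Real.exp (-I t) * -(h t)) t := fun t =>
    ((hIderiv t).neg.exp.mul (hJderiv t))
  have hgam_eq : ∀ t ∈ Icc (0:ℝ) p.T, p.gam xb t = g t := by
    intro t ht
    have h1 : p.gam xb t = ∫ v in t..p.T, Real.exp (-I t) * h v := by
      refine intervalIntegral.integral_congr ?_
      intro v hv
      rw [Set.uIcc_of_le ht.2] at hv
      have hxv : xt v = xb v := hxteq v ⟨le_trans ht.1 hv.1, hv.2⟩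
      have hsub : I v - I t = ∫ r in t..v, p.AA r := by
        simpa [hIdef] using intervalIntegral.integral_interval_sub_left (hIint 0 v) (hIint 0 t)
      show p.Gam t v * (p.Th3 v * xb v - p.Q * p.eta) = Real.exp (-I t) * h v
      simp only [hhdef, hfdef, hxv, P.Gam]
      rw [← hsub, ← mul_assoc, ← Real.exp_add, neg_add_eq_sub]
    rw [h1, intervalIntegral.integral_const_mul, hgdef]
    simp only [hJdef]
    congr 1
    exact intervalIntegral.integral_symm p.T t
  have hUD : UniqueDiffOn ℝ (Icc (0:ℝ) p.T) := uniqueDiffOn_Icc hT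
  refine ⟨?_, ?_, ?_⟩
  · intro t ht
    exact ((hgderiv t).differentiableAt.differentiableWithinAt).congr
      (fun y hy => hgam_eq y hy) (hgam_eq t ht)
  · intro t ht
    have hd : derivWithin (p.gam xb) (Icc 0 p.T) t
        = Real.exp (-I t) * -p.AA t * J t + Real.exp (-I t) * -(h t) := by
      rw [derivWithin_congr (fun y hy => hgam_eq y hy) (hgam_eq t ht)]
      exact ((hgderiv t).hasDerivWithinAt).derivWithin (hUD t ht)
    rw [hd, hgam_eq t ht, hgdef]
    simp only [hhdef, hfdef, hxteq t ht]
    have hE : Real.exp (-I t) * Real.exp (I t) = 1 := by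
      rw [← Real.exp_add]; simp
    linear_combination (-(p.Th3 t * xb t - p.Q * p.eta)) * hE
  · simp [P.gam]

end
end

section
/- Suppose B ≠ 0 and Q > 0, and let x̄ : [0,T] → ℝ be continuous. Then τ := τ[x̄] is differentiable on [0,T], satisfies τ′(t) + Cτ(t) − ((B²/R)ζ(t) + BD/R)·γ[x̄](t) + (Fζ(t) + L)x̄(t) = 0 for all t ∈ [0,T], and satisfies the terminal condition τ(T) = 0. -/
open Real Set

noncomputable section

lemma abs_lt_lam (p : P) (hQ : 0 < p.Q) (hR : 0 < p.R) (hB : p.B ≠ 0) : |p.a| < p.lam := by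
  have h1 : 0 < p.B ^ 2 * p.Q / p.R := by positivity
  have := Real.sqrt_lt_sqrt (sq_nonneg p.a) (by linarith : p.a ^ 2 < p.a ^ 2 + p.B ^ 2 * p.Q / p.R)
  simpa [P.lam, Real.sqrt_sq_eq_abs] using this

lemma cont_beta (p : P) (hQ : 0 < p.Q) (hR : 0 < p.R) (hB : p.B ≠ 0) : Continuous p.beta := by
  have hlam := abs_lt_lam p hQ hR hB
  have h1 : p.a < p.lam := lt_of_le_of_lt (le_abs_self _) hlam
  have h2 : -p.lam < p.a := neg_lt_of_abs_lt hlam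
  have hden : ∀ t : ℝ, 0 < (p.lam - p.a) * Real.exp (2 * p.lam * (p.T - t)) + (p.lam + p.a) := by
    intro t
    have := Real.exp_pos (2 * p.lam * (p.T - t))
    nlinarith
  unfold P.beta
  exact Continuous.div (by fun_prop) (by fun_prop) (fun t => (hden t).ne')

lemma cont_AA (p : P) (hQ : 0 < p.Q) (hR : 0 < p.R) (hB : p.B ≠ 0) : Continuous p.AA := by
  unfold P.AA
  exact continuous_const.sub (continuous_const.mul (cont_beta p hQ hR hB))

/-- for continuous `x̄`, `τ = τ[x̄]` is differentiable on `[0,T]`, satisfies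
`τ′(t) + Cτ(t) − ((B²/R)ζ(t) + BD/R)γ[x̄](t) + (Fζ(t) + L)x̄(t) = 0` on `[0,T]`, and
`τ(T) = 0`. -/
theorem tau_solves_ode (p : P) (hT : 0 < p.T) (hQ : 0 < p.Q) (hR : 0 < p.R)
    (hB : p.B ≠ 0) (xb : ℝ → ℝ) (hxb : ContinuousOn xb (Set.Icc 0 p.T)) :
    DifferentiableOn ℝ (p.tau xb) (Set.Icc 0 p.T) ∧
      (∀ t ∈ Set.Icc 0 p.T,
        derivWithin (p.tau xb) (Set.Icc 0 p.T) t + p.C * p.tau xb t -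
          (p.B ^ 2 / p.R * p.zeta t + p.B * p.D / p.R) * p.gam xb t +
          (p.F * p.zeta t + p.L) * xb t = 0) ∧
      p.tau xb p.T = 0 := by
  have hbeta := cont_beta p hQ hR hB
  have hAA := cont_AA p hQ hR hB
  have hAAint : ∀ a b : ℝ, IntervalIntegrable p.AA MeasureTheory.volume a b :=
    fun a b => hAA.intervalIntegrable a b
  set I : ℝ → ℝ := fun t => ∫ r in (0:ℝ)..t, p.AA r with hIdef
  have hIcont : Continuous I := intervalIntegral.continuous_primitive hAAint 0
  have hGam : ∀ s t : ℝ, p.Gam s t = Real.exp (I t - I s) := by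
    intro s t
    have h := intervalIntegral.integral_interval_sub_left (hAAint 0 t) (hAAint 0 s)
    unfold P.Gam
    rw [← h]
  -- E and continuity of alpha / zeta
  set E : ℝ → ℝ := fun t => Real.exp (p.C * t + I t) with hEdef
  have hEcont : Continuous E := Real.continuous_exp.comp ((continuous_const.mul continuous_id).add hIcont)
  have hEpos : ∀ t, 0 < E t := fun t => Real.exp_pos _
  have hTh6 : Continuous p.Th6 := by
    unfold P.Th6; exact (continuous_const.mul hbeta).sub continuous_const
  set J6 : ℝ → ℝ := fun u => ∫ v in (0:ℝ)..u, E v * p.Th6 v with hJ6def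
  have hJ6cont : Continuous J6 :=
    intervalIntegral.continuous_primitive (fun a b => (hEcont.mul hTh6).intervalIntegrable a b) 0
  have hexp_div : ∀ t v : ℝ, Real.exp (p.C * (v - t)) * p.Gam t v = E v / E t := by
    intro t v
    rw [hGam, hEdef, ← Real.exp_add, ← Real.exp_sub]
    ring_nf
  have halpha : ∀ t : ℝ, p.alpha t = (-p.K * E p.T + (J6 p.T - J6 t)) / E t := by
    intro t
    unfold P.alpha
    have h1 : -p.K * Real.exp (p.C * (p.T - t)) * p.Gam t p.T = -p.K * E p.T / E t := by
      rw [mul_assoc, hexp_div]; ring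
    have h2 : (∫ v in t..p.T, Real.exp (p.C * (v - t)) * p.Gam t v * p.Th6 v)
        = (J6 p.T - J6 t) / E t := by
      rw [intervalIntegral.integral_congr
        (g := fun v => (E t)⁻¹ * (E v * p.Th6 v)) (fun v _ => by rw [hexp_div]; ring)]
      rw [intervalIntegral.integral_const_mul,
        intervalIntegral.integral_interval_sub_left (f := fun v => E v * p.Th6 v)
          ((hEcont.mul hTh6).intervalIntegrable 0 p.T) ((hEcont.mul hTh6).intervalIntegrable 0 t)]
      rw [div_eq_inv_mul]
    rw [h1, h2]; ring
  have hzeta : Continuous p.zeta := by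
    have ha : Continuous p.alpha := by
      rw [show p.alpha = fun t => (-p.K * E p.T + (J6 p.T - J6 t)) / E t from funext halpha]
      exact ((continuous_const.add (continuous_const.sub hJ6cont)).div hEcont
        (fun t => (hEpos t).ne'))
    unfold P.zeta; exact ha.neg
  have hTh2 : Continuous p.Th2 := by
    unfold P.Th2; exact ((continuous_const.mul hzeta).add continuous_const).neg
  have hTh4 : Continuous p.Th4 := by
    unfold P.Th4; exact (continuous_const.mul hzeta).add continuous_const
  have hTh3 : Continuous p.Th3 := by
    unfold P.Th3; exact (continuous_const.mul hbeta).sub continuous_const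
  have hIcc : Set.Icc (0:ℝ) p.T = Set.uIcc 0 p.T := (Set.uIcc_of_le hT.le).symm
  have hsub : ∀ t ∈ Set.Icc (0:ℝ) p.T, Set.uIcc t p.T ⊆ Set.Icc 0 p.T := by
    intro t ht
    rw [hIcc]
    exact Set.uIcc_subset_uIcc (hIcc ▸ ht) (hIcc ▸ Set.right_mem_Icc.2 hT.le)
  have hsub0 : ∀ t ∈ Set.Icc (0:ℝ) p.T, Set.uIcc 0 t ⊆ Set.Icc 0 p.T := by
    intro t ht
    rw [hIcc]
    exact Set.uIcc_subset_uIcc (hIcc ▸ Set.left_mem_Icc.2 hT.le) (hIcc ▸ ht)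
  -- gamma
  set g3 : ℝ → ℝ := fun v => Real.exp (I v) * (p.Th3 v * xb v - p.Q * p.eta) with hg3def
  have hg3cont : ContinuousOn g3 (Set.Icc 0 p.T) :=
    ((Real.continuous_exp.comp hIcont).continuousOn).mul
      (((hTh3.continuousOn).mul hxb).sub continuousOn_const)
  have hg3int : ∀ a ∈ Set.Icc (0:ℝ) p.T, ∀ b ∈ Set.Icc (0:ℝ) p.T,
      IntervalIntegrable g3 MeasureTheory.volume a b := by
    intro a ha b hb
    apply ContinuousOn.intervalIntegrable
    apply hg3cont.mono
    rw [hIcc]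
    exact Set.uIcc_subset_uIcc (hIcc ▸ ha) (hIcc ▸ hb)
  set G3 : ℝ → ℝ := fun u => ∫ v in (0:ℝ)..u, g3 v with hG3def
  have hG3cont : ContinuousOn G3 (Set.Icc 0 p.T) := by
    rw [hIcc]
    apply intervalIntegral.continuousOn_primitive_interval
    rw [← hIcc]
    exact hg3cont.integrableOn_Icc
  have hT_mem : p.T ∈ Set.Icc (0:ℝ) p.T := Set.right_mem_Icc.2 hT.le
  have hgam : ∀ t ∈ Set.Icc (0:ℝ) p.T,
      p.gam xb t = Real.exp (-(I t)) * (G3 p.T - G3 t) := by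
    intro t ht
    unfold P.gam
    rw [intervalIntegral.integral_congr (g := fun v => Real.exp (-(I t)) * g3 v)
      (fun v hv => by
        simp only [hg3def]
        rw [hGam, Real.exp_sub, Real.exp_neg]
        ring)]
    rw [intervalIntegral.integral_const_mul,
      intervalIntegral.integral_interval_sub_left (hg3int 0 (Set.left_mem_Icc.2 hT.le) p.T hT_mem)
        (hg3int 0 (Set.left_mem_Icc.2 hT.le) t ht)]
  have hgamcont : ContinuousOn (p.gam xb) (Set.Icc 0 p.T) := by
    refine ContinuousOn.congr (f := fun t => Real.exp (-(I t)) * (G3 p.T - G3 t))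
      ?_ (fun t ht => hgam t ht)
    exact ((Real.continuous_exp.comp hIcont.neg).continuousOn).mul
      (continuousOn_const.sub hG3cont)
  -- psi and its primitive
  set ψ : ℝ → ℝ := fun r => Real.exp (p.C * r) * (p.Th2 r * p.gam xb r + p.Th4 r * xb r)
    with hψdef
  have hψcont : ContinuousOn ψ (Set.Icc 0 p.T) :=
    ((Real.continuous_exp.comp (continuous_const.mul continuous_id)).continuousOn).mul
      (((hTh2.continuousOn).mul hgamcont).add ((hTh4.continuousOn).mul hxb))
  have hψint : ∀ a ∈ Set.Icc (0:ℝ) p.T, ∀ b ∈ Set.Icc (0:ℝ) p.T,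
      IntervalIntegrable ψ MeasureTheory.volume a b := by
    intro a ha b hb
    apply ContinuousOn.intervalIntegrable
    apply hψcont.mono
    rw [hIcc]
    exact Set.uIcc_subset_uIcc (hIcc ▸ ha) (hIcc ▸ hb)
  set Φ : ℝ → ℝ := fun u => ∫ r in (0:ℝ)..u, ψ r with hΦdef
  have h0_mem : (0:ℝ) ∈ Set.Icc (0:ℝ) p.T := Set.left_mem_Icc.2 hT.le
  have hΦderiv : ∀ t ∈ Set.Icc (0:ℝ) p.T,
      HasDerivWithinAt Φ (ψ t) (Set.Icc 0 p.T) t := by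
    intro t ht
    haveI : Fact (t ∈ Set.Icc (0:ℝ) p.T) := ⟨ht⟩
    exact intervalIntegral.integral_hasDerivWithinAt_right (hψint 0 h0_mem t ht)
      (hψcont.stronglyMeasurableAtFilter_nhdsWithin measurableSet_Icc t) (hψcont t ht)
  -- tau in closed form
  have htau : ∀ t ∈ Set.Icc (0:ℝ) p.T,
      p.tau xb t = Real.exp (-(p.C * t)) * (Φ p.T - Φ t) := by
    intro t ht
    have hrfl : p.tau xb t =
        (∫ r in t..p.T, Real.exp (p.C * (r - t)) * p.Th2 r * p.gam xb r) +
          ∫ r in t..p.T, Real.exp (p.C * (r - t)) * p.Th4 r * xb r := rfl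
    have hc1 : ContinuousOn (fun r => Real.exp (p.C * (r - t)) * p.Th2 r * p.gam xb r)
        (Set.uIcc t p.T) := by
      apply ContinuousOn.mono _ (hsub t ht)
      exact (((Real.continuous_exp.comp (continuous_const.mul (continuous_id.sub
        continuous_const))).continuousOn).mul hTh2.continuousOn).mul hgamcont
    have hc2 : ContinuousOn (fun r => Real.exp (p.C * (r - t)) * p.Th4 r * xb r)
        (Set.uIcc t p.T) := by
      apply ContinuousOn.mono _ (hsub t ht)
      exact (((Real.continuous_exp.comp (continuous_const.mul (continuous_id.sub
        continuous_const))).continuousOn).mul hTh4.continuousOn).mul hxb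
    rw [hrfl, ← intervalIntegral.integral_add hc1.intervalIntegrable hc2.intervalIntegrable]
    rw [intervalIntegral.integral_congr (g := fun r => Real.exp (-(p.C * t)) * ψ r)
      (fun r hr => by
        simp only [hψdef]
        have hE : Real.exp (p.C * (r - t)) = Real.exp (-(p.C * t)) * Real.exp (p.C * r) := by
          rw [← Real.exp_add]; ring_nf
        rw [hE]; ring)]
    rw [intervalIntegral.integral_const_mul,
      intervalIntegral.integral_interval_sub_left (hψint 0 h0_mem p.T hT_mem)
        (hψint 0 h0_mem t ht)]
  have hEq : Set.EqOn (p.tau xb) (fun u => Real.exp (-(p.C * u)) * (Φ p.T - Φ u))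
      (Set.Icc 0 p.T) := fun t ht => htau t ht
  have htauD : ∀ t ∈ Set.Icc (0:ℝ) p.T,
      HasDerivWithinAt (fun u => Real.exp (-(p.C * u)) * (Φ p.T - Φ u))
        (-p.C * (Real.exp (-(p.C * t)) * (Φ p.T - Φ t)) - Real.exp (-(p.C * t)) * ψ t)
        (Set.Icc 0 p.T) t := by
    intro t ht
    have h1 : HasDerivAt (fun u : ℝ => Real.exp (-(p.C * u))) (Real.exp (-(p.C * t)) * (-p.C)) t := by
      have hlin : HasDerivAt (fun u : ℝ => -(p.C * u)) (-p.C) t := by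
        exact (((hasDerivAt_id t).const_mul p.C).neg).congr_deriv (by ring)
      exact hlin.exp
    have h2 : HasDerivWithinAt (fun u => Φ p.T - Φ u) (-(ψ t)) (Set.Icc 0 p.T) t :=
      (hΦderiv t ht).const_sub _
    have : HasDerivWithinAt (fun u => Real.exp (-(p.C * u)) * (Φ p.T - Φ u)) _ (Set.Icc 0 p.T) t :=
      (h1.hasDerivWithinAt).mul h2
    convert this using 1
    ring
  refine ⟨?_, ?_, ?_⟩
  · intro t ht
    exact ((htauD t ht).differentiableWithinAt).congr hEq (htau t ht)
  · intro t ht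
    have hd : derivWithin (p.tau xb) (Set.Icc 0 p.T) t =
        -p.C * (Real.exp (-(p.C * t)) * (Φ p.T - Φ t)) - Real.exp (-(p.C * t)) * ψ t := by
      rw [derivWithin_congr hEq (htau t ht)]
      exact (htauD t ht).derivWithin ((uniqueDiffOn_Icc hT) t ht)
    rw [hd, htau t ht]
    have hψt : Real.exp (-(p.C * t)) * ψ t = p.Th2 t * p.gam xb t + p.Th4 t * xb t := by
      simp only [hψdef]
      rw [← mul_assoc, ← Real.exp_add, neg_add_cancel, Real.exp_zero, one_mul]
    rw [hψt]
    unfold P.Th2 P.Th4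
    ring
  · simp [P.tau, intervalIntegral.integral_same]

end
end

section
/- Suppose B ≠ 0, Q > 0 and N₀ ≥ 0. For all continuous functions x, y : [0,T] → ℝ, the map 𝒯 satisfies the Lipschitz estimate ‖𝒯x − 𝒯y‖_∞ ≤ ‖x − y‖_∞ · ( e^{(2|C|+|F|)T} Γ̄² Θ̄₁Θ̄₂Θ̄₃ + e^{(2|C|+|F|)T} Γ̄ Θ̄₁Θ̄₄ + e^{|F|T} (B²/R) T Γ̄² Θ̄₃ ), where ‖f‖_∞ := sup_{t ∈ [0,T]} |f(t)|. -/
open Real Set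

noncomputable section

namespace Aux

variable (p : P)

lemma denom_pos (hQ : 0 < p.Q) (hR : 0 < p.R) (hB : p.B ≠ 0) (t : ℝ) :
    0 < (p.lam - p.a) * Real.exp (2 * p.lam * (p.T - t)) + (p.lam + p.a) := by
  have ha : |p.a| < p.lam := by
    have h1 : 0 < p.B ^ 2 * p.Q / p.R := by positivity
    have h2 : p.a ^ 2 < p.a ^ 2 + p.B ^ 2 * p.Q / p.R := by linarith
    calc |p.a| = Real.sqrt (p.a ^ 2) := (Real.sqrt_sq_eq_abs _).symm
      _ < p.lam := Real.sqrt_lt_sqrt (sq_nonneg _) h2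
  have h1 : 0 < p.lam - p.a := by have := le_abs_self p.a; linarith
  have h2 : 0 < p.lam + p.a := by have := neg_abs_le p.a; linarith
  nlinarith [Real.exp_pos (2 * p.lam * (p.T - t))]

lemma continuous_beta (hQ : 0 < p.Q) (hR : 0 < p.R) (hB : p.B ≠ 0) :
    Continuous p.beta := by
  refine Continuous.div (by continuity) (by continuity)
    (fun t => (denom_pos p hQ hR hB t).ne')

variable (hQ : 0 < p.Q) (hR : 0 < p.R) (hB : p.B ≠ 0)
include hQ hR hB

lemma continuous_AA : Continuous p.AA := by
  unfold P.AA
  exact continuous_const.sub (continuous_const.mul (continuous_beta p hQ hR hB))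

lemma AA_ii (a b : ℝ) : IntervalIntegrable p.AA MeasureTheory.volume a b :=
  (continuous_AA p hQ hR hB).intervalIntegrable a b

lemma continuous_G0 : Continuous (fun t => p.Gam 0 t) := by
  unfold P.Gam
  exact Real.continuous_exp.comp
    (intervalIntegral.continuous_primitive (AA_ii p hQ hR hB) 0)

omit hQ hR hB in
lemma Gam_pos (s t : ℝ) : 0 < p.Gam s t := Real.exp_pos _

lemma Gam_eq (s t : ℝ) : p.Gam s t = p.Gam 0 t / p.Gam 0 s := by
  unfold P.Gam
  rw [← Real.exp_sub]
  congr 1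
  rw [intervalIntegral.integral_interval_sub_left (AA_ii p hQ hR hB 0 t)
    (AA_ii p hQ hR hB 0 s)]

lemma continuous_Gam_right (s : ℝ) : Continuous (fun t => p.Gam s t) := by
  unfold P.Gam
  exact Real.continuous_exp.comp
    (intervalIntegral.continuous_primitive (AA_ii p hQ hR hB) s)

lemma continuous_Gam_left (t : ℝ) : Continuous (fun s => p.Gam s t) := by
  have h : (fun s => p.Gam s t) = fun s => p.Gam 0 t / p.Gam 0 s :=
    funext fun s => Gam_eq p hQ hR hB s t
  rw [h]
  exact continuous_const.div (continuous_G0 p hQ hR hB)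
    (fun s => (Gam_pos p 0 s).ne')

lemma Gam_le {s t : ℝ} (hs : s ∈ Set.Icc 0 p.T) (ht : t ∈ Set.Icc 0 p.T) :
    p.Gam s t ≤ p.GamBar := by
  unfold P.Gam P.GamBar
  rw [Real.exp_le_exp]
  have habs : IntervalIntegrable (fun r => |p.AA r|) MeasureTheory.volume 0 p.T :=
    ((continuous_AA p hQ hR hB).abs).intervalIntegrable 0 p.T
  have hnn : 0 ≤ᵐ[MeasureTheory.volume.restrict (Set.Ioc 0 p.T)]
      (fun r => |p.AA r|) := Filter.Eventually.of_forall (fun r => abs_nonneg _)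
  rcases le_total s t with h | h
  · calc (∫ r in s..t, p.AA r) ≤ ∫ r in s..t, |p.AA r| :=
          intervalIntegral.integral_mono_on h (AA_ii p hQ hR hB s t)
            (((continuous_AA p hQ hR hB).abs).intervalIntegrable s t)
            (fun r _ => le_abs_self _)
      _ ≤ ∫ r in (0:ℝ)..p.T, |p.AA r| :=
          intervalIntegral.integral_mono_interval hs.1 h ht.2 hnn habs
  · have h1 : (∫ r in s..t, p.AA r) = -∫ r in t..s, p.AA r :=
      intervalIntegral.integral_symm t s
    rw [h1]
    calc -∫ r in t..s, p.AA r = ∫ r in t..s, -p.AA r := by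
          rw [intervalIntegral.integral_neg]
      _ ≤ ∫ r in t..s, |p.AA r| :=
          intervalIntegral.integral_mono_on h
            ((continuous_AA p hQ hR hB).neg.intervalIntegrable t s)
            (((continuous_AA p hQ hR hB).abs).intervalIntegrable t s)
            (fun r _ => neg_le_abs _)
      _ ≤ ∫ r in (0:ℝ)..p.T, |p.AA r| :=
          intervalIntegral.integral_mono_interval ht.1 h hs.2 hnn habs

omit hQ hR hB in
lemma GamBar_pos : 0 < p.GamBar := Real.exp_pos _

lemma continuous_Th6 : Continuous p.Th6 := by
  unfold P.Th6
  exact (continuous_const.mul (continuous_beta p hQ hR hB)).sub continuous_const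

lemma alpha_eq (t : ℝ) :
    p.alpha t = -p.K * Real.exp (p.C * (p.T - t)) * p.Gam t p.T +
      (Real.exp (-(p.C * t)) / p.Gam 0 t) *
        ∫ v in t..p.T, Real.exp (p.C * v) * p.Gam 0 v * p.Th6 v := by
  unfold P.alpha
  congr 1
  rw [← intervalIntegral.integral_const_mul]
  refine intervalIntegral.integral_congr (fun v _ => ?_)
  rw [Gam_eq p hQ hR hB t v,
    show p.C * (v - t) = p.C * v + -(p.C * t) by ring, Real.exp_add]
  have h0 : p.Gam 0 t ≠ 0 := (Gam_pos p 0 t).ne'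
  field_simp

lemma continuous_alpha : Continuous p.alpha := by
  have h : p.alpha = fun t => -p.K * Real.exp (p.C * (p.T - t)) * p.Gam t p.T +
      (Real.exp (-(p.C * t)) / p.Gam 0 t) *
        ∫ v in t..p.T, Real.exp (p.C * v) * p.Gam 0 v * p.Th6 v :=
    funext fun t => alpha_eq p hQ hR hB t
  rw [h]
  have hh : Continuous fun v => Real.exp (p.C * v) * p.Gam 0 v * p.Th6 v :=
    ((Real.continuous_exp.comp (continuous_const.mul continuous_id)).mul
      (continuous_G0 p hQ hR hB)).mul (continuous_Th6 p hQ hR hB)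
  have hprim : Continuous fun t =>
      ∫ v in t..p.T, Real.exp (p.C * v) * p.Gam 0 v * p.Th6 v := by
    have h2 : (fun t => ∫ v in t..p.T, Real.exp (p.C * v) * p.Gam 0 v * p.Th6 v) =
        fun t => (∫ v in (0:ℝ)..p.T, Real.exp (p.C * v) * p.Gam 0 v * p.Th6 v) -
          ∫ v in (0:ℝ)..t, Real.exp (p.C * v) * p.Gam 0 v * p.Th6 v :=
      funext fun t => by
        rw [intervalIntegral.integral_interval_sub_left (hh.intervalIntegrable 0 p.T)
          (hh.intervalIntegrable 0 t)]
    rw [h2]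
    exact continuous_const.sub (intervalIntegral.continuous_primitive
      (fun a b => hh.intervalIntegrable a b) 0)
  refine Continuous.add ?_ (Continuous.mul ?_ hprim)
  · exact (continuous_const.mul (Real.continuous_exp.comp (by continuity))).mul
      (continuous_Gam_left p hQ hR hB p.T)
  · exact (Real.continuous_exp.comp (by continuity)).div
      (continuous_G0 p hQ hR hB) (fun t => (Gam_pos p 0 t).ne')

lemma continuous_zeta : Continuous p.zeta := (continuous_alpha p hQ hR hB).neg

lemma continuous_Th1 : Continuous p.Th1 := by
  unfold P.Th1
  simp only [div_eq_mul_inv]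
  exact (((continuous_const.mul (continuous_alpha p hQ hR hB)).sub
    continuous_const).mul continuous_const).mul continuous_const

lemma continuous_Th2 : Continuous p.Th2 := by
  unfold P.Th2
  exact ((continuous_const.mul (continuous_zeta p hQ hR hB)).add continuous_const).neg

omit hQ hR hB in
lemma continuous_Th3 (hQ : 0 < p.Q) (hR : 0 < p.R) (hB : p.B ≠ 0) :
    Continuous p.Th3 := by
  unfold P.Th3
  exact (continuous_const.mul (continuous_beta p hQ hR hB)).sub continuous_const

lemma continuous_Th4 : Continuous p.Th4 := by
  unfold P.Th4
  exact (continuous_const.mul (continuous_zeta p hQ hR hB)).add continuous_const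

omit hQ hR hB in
lemma ii_of_cOn {f : ℝ → ℝ} (hf : ContinuousOn f (Set.Icc 0 p.T)) {a b : ℝ}
    (ha : a ∈ Set.Icc 0 p.T) (hb : b ∈ Set.Icc 0 p.T) :
    IntervalIntegrable f MeasureTheory.volume a b :=
  (hf.mono (Set.uIcc_subset_Icc ha hb)).intervalIntegrable

lemma continuousOn_gam (hT : 0 ≤ p.T) {xb : ℝ → ℝ}
    (hxb : ContinuousOn xb (Set.Icc 0 p.T)) :
    ContinuousOn (p.gam xb) (Set.Icc 0 p.T) := by
  set f : ℝ → ℝ := fun v => p.Gam 0 v * (p.Th3 v * xb v - p.Q * p.eta) with hf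
  have hfun : ContinuousOn f (Set.Icc 0 p.T) :=
    (continuous_G0 p hQ hR hB).continuousOn.mul
      (((continuous_Th3 p hQ hR hB).continuousOn.mul hxb).sub continuousOn_const)
  have hT0 : (0:ℝ) ∈ Set.Icc 0 p.T := ⟨le_rfl, hT⟩
  have hTT : p.T ∈ Set.Icc 0 p.T := ⟨hT, le_rfl⟩
  have hEq : Set.EqOn (p.gam xb)
      (fun s => (p.Gam 0 s)⁻¹ *
        ((∫ v in (0:ℝ)..p.T, f v) - ∫ v in (0:ℝ)..s, f v)) (Set.Icc 0 p.T) := by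
    intro s hs
    show p.gam xb s = (p.Gam 0 s)⁻¹ *
      ((∫ v in (0:ℝ)..p.T, f v) - ∫ v in (0:ℝ)..s, f v)
    calc p.gam xb s = ∫ v in s..p.T, (p.Gam 0 s)⁻¹ * f v :=
          intervalIntegral.integral_congr (fun v _ => by
            show p.Gam s v * _ = _
            rw [Gam_eq p hQ hR hB s v]; rw [hf]; ring)
      _ = (p.Gam 0 s)⁻¹ * ∫ v in s..p.T, f v :=
          intervalIntegral.integral_const_mul _ _
      _ = _ := by
          rw [intervalIntegral.integral_interval_sub_left
            (ii_of_cOn p hfun hT0 hTT) (ii_of_cOn p hfun hT0 hs)]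
  refine ContinuousOn.congr ?_ hEq
  refine ContinuousOn.mul ?_ (ContinuousOn.sub continuousOn_const ?_)
  · exact ((continuous_G0 p hQ hR hB).continuousOn).inv₀
      (fun s _ => (Gam_pos p 0 s).ne')
  · have := intervalIntegral.continuousOn_primitive_interval
      (f := f) (a := (0:ℝ)) (b := p.T) (μ := MeasureTheory.volume) ?_
    · rwa [Set.uIcc_of_le hT] at this
    · rw [Set.uIcc_of_le hT]; exact hfun.integrableOn_Icc

end Aux

set_option maxHeartbeats 2000000 in
/-- the Lipschitz estimate for the fixed-point map `𝒯` in the sup-norm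
`‖f‖_∞ := sup_{t ∈ [0,T]} |f(t)|`. -/
theorem Tmap_lipschitz (p : P) (hT : 0 < p.T) (hQ : 0 < p.Q) (hR : 0 < p.R)
    (hB : p.B ≠ 0) (hN0 : 0 ≤ p.N0) (x y : ℝ → ℝ)
    (hx : ContinuousOn x (Set.Icc 0 p.T)) (hy : ContinuousOn y (Set.Icc 0 p.T)) :
    sSup ((fun t => |p.Tmap x t - p.Tmap y t|) '' Set.Icc 0 p.T) ≤
      sSup ((fun t => |x t - y t|) '' Set.Icc 0 p.T) *
        (Real.exp ((2 * |p.C| + |p.F|) * p.T) * p.GamBar ^ 2 * p.ThBar1 * p.ThBar2 * p.ThBar3 +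
          Real.exp ((2 * |p.C| + |p.F|) * p.T) * p.GamBar * p.ThBar1 * p.ThBar4 +
          Real.exp (|p.F| * p.T) * (p.B ^ 2 / p.R) * p.T * p.GamBar ^ 2 * p.ThBar3) := by
  have hT0 : (0:ℝ) ∈ Set.Icc 0 p.T := ⟨le_rfl, hT.le⟩
  have hTT : p.T ∈ Set.Icc 0 p.T := ⟨hT.le, le_rfl⟩
  set M := sSup ((fun t => |x t - y t|) '' Set.Icc 0 p.T) with hMdef
  have hbdd : BddAbove ((fun t => |x t - y t|) '' Set.Icc 0 p.T) :=
    (isCompact_Icc.image_of_continuousOn ((hx.sub hy).abs)).bddAbove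
  have hMge : ∀ v ∈ Set.Icc 0 p.T, |x v - y v| ≤ M := fun v hv =>
    le_csSup hbdd ⟨v, hv, rfl⟩
  have hM0 : 0 ≤ M := (abs_nonneg _).trans (hMge 0 hT0)
  set C1 := Real.exp (|p.C| * p.T) with hC1def
  set CF := Real.exp (|p.F| * p.T) with hCFdef
  have hC1 : 0 < C1 := Real.exp_pos _
  have hCF : 0 < CF := Real.exp_pos _
  have hΓ : 0 < p.GamBar := Aux.GamBar_pos p
  have hBR : 0 < p.B ^ 2 / p.R := by positivity
  have hTh1nn : 0 ≤ p.ThBar1 :=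
    intervalIntegral.integral_nonneg hT.le (fun u _ => abs_nonneg _)
  have hTh2nn : 0 ≤ p.ThBar2 :=
    intervalIntegral.integral_nonneg hT.le (fun u _ => abs_nonneg _)
  have hTh3nn : 0 ≤ p.ThBar3 :=
    intervalIntegral.integral_nonneg hT.le (fun u _ => abs_nonneg _)
  have hTh4nn : 0 ≤ p.ThBar4 :=
    intervalIntegral.integral_nonneg hT.le (fun u _ => abs_nonneg _)
  have hexpC : ∀ s ∈ Set.Icc 0 p.T, Real.exp (p.C * s) ≤ C1 := by
    intro s hs
    rw [hC1def, Real.exp_le_exp]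
    calc p.C * s ≤ |p.C * s| := le_abs_self _
      _ = |p.C| * |s| := abs_mul _ _
      _ ≤ |p.C| * p.T := by
          refine mul_le_mul_of_nonneg_left ?_ (abs_nonneg _)
          rw [abs_of_nonneg hs.1]; exact hs.2
  -- continuity facts
  have hcTh1 := Aux.continuous_Th1 p hQ hR hB
  have hcTh2 := Aux.continuous_Th2 p hQ hR hB
  have hcTh3 := Aux.continuous_Th3 p hQ hR hB
  have hcTh4 := Aux.continuous_Th4 p hQ hR hB
  have hgamx := Aux.continuousOn_gam p hQ hR hB hT.le hx
  have hgamy := Aux.continuousOn_gam p hQ hR hB hT.le hy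
  have hΘ3abs : IntervalIntegrable (fun v => |p.Th3 v|) MeasureTheory.volume 0 p.T :=
    hcTh3.abs.intervalIntegrable 0 p.T
  -- Step A : bound on gam x - gam y
  have hΔγ : ∀ s ∈ Set.Icc 0 p.T, |p.gam x s - p.gam y s| ≤ p.GamBar * p.ThBar3 * M := by
    intro s hs
    have hGsc : Continuous (fun v => p.Gam s v) := Aux.continuous_Gam_right p hQ hR hB s
    have hxc : ContinuousOn (fun v => p.Gam s v * (p.Th3 v * x v - p.Q * p.eta))
        (Set.Icc 0 p.T) :=
      hGsc.continuousOn.mul ((hcTh3.continuousOn.mul hx).sub continuousOn_const)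
    have hyc : ContinuousOn (fun v => p.Gam s v * (p.Th3 v * y v - p.Q * p.eta))
        (Set.Icc 0 p.T) :=
      hGsc.continuousOn.mul ((hcTh3.continuousOn.mul hy).sub continuousOn_const)
    have hsub : p.gam x s - p.gam y s =
        ∫ v in s..p.T, p.Gam s v * p.Th3 v * (x v - y v) := by
      show (∫ v in s..p.T, p.Gam s v * (p.Th3 v * x v - p.Q * p.eta)) -
          (∫ v in s..p.T, p.Gam s v * (p.Th3 v * y v - p.Q * p.eta)) = _
      rw [← intervalIntegral.integral_sub (Aux.ii_of_cOn p hxc hs hTT)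
        (Aux.ii_of_cOn p hyc hs hTT)]
      exact intervalIntegral.integral_congr (fun v _ => by ring)
    rw [hsub]
    have hcd : ContinuousOn (fun v => p.Gam s v * p.Th3 v * (x v - y v))
        (Set.Icc 0 p.T) :=
      (hGsc.continuousOn.mul hcTh3.continuousOn).mul (hx.sub hy)
    calc |∫ v in s..p.T, p.Gam s v * p.Th3 v * (x v - y v)|
        ≤ ∫ v in s..p.T, |p.Gam s v * p.Th3 v * (x v - y v)| :=
          intervalIntegral.abs_integral_le_integral_abs hs.2
      _ ≤ ∫ v in s..p.T, p.GamBar * M * |p.Th3 v| := by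
          refine intervalIntegral.integral_mono_on hs.2
            (Aux.ii_of_cOn p hcd.abs hs hTT)
            ((continuous_const.mul hcTh3.abs).intervalIntegrable s p.T) ?_
          intro v hv
          have hv' : v ∈ Set.Icc 0 p.T := ⟨hs.1.trans hv.1, hv.2⟩
          rw [abs_mul, abs_mul, abs_of_pos (Aux.Gam_pos p s v)]
          have h1 : p.Gam s v ≤ p.GamBar := Aux.Gam_le p hQ hR hB hs hv'
          have h2 : |x v - y v| ≤ M := hMge v hv'
          calc p.Gam s v * |p.Th3 v| * |x v - y v| ≤ p.GamBar * |p.Th3 v| * M := by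
                refine mul_le_mul (mul_le_mul h1 le_rfl (abs_nonneg _) hΓ.le) h2
                  (abs_nonneg _) (by positivity)
            _ = p.GamBar * M * |p.Th3 v| := by ring
      _ = p.GamBar * M * ∫ v in s..p.T, |p.Th3 v| :=
          intervalIntegral.integral_const_mul _ _
      _ ≤ p.GamBar * M * p.ThBar3 := by
          refine mul_le_mul_of_nonneg_left ?_ (by positivity)
          exact intervalIntegral.integral_mono_interval hs.1 hs.2 le_rfl
            (Filter.Eventually.of_forall fun v => abs_nonneg _) hΘ3abs
      _ = p.GamBar * p.ThBar3 * M := by ring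
  -- Step B : bound on tau x 0 - tau y 0
  have htau0 : ∀ xb : ℝ → ℝ, p.tau xb 0 =
      (∫ r in (0:ℝ)..p.T, Real.exp (p.C * r) * p.Th2 r * p.gam xb r) +
        ∫ r in (0:ℝ)..p.T, Real.exp (p.C * r) * p.Th4 r * xb r := by
    intro xb; simp [P.tau, P.gam]
  have hc1x : ContinuousOn (fun r => Real.exp (p.C * r) * p.Th2 r * p.gam x r)
      (Set.Icc 0 p.T) := (((Real.continuous_exp.comp (by continuity)).mul
        hcTh2).continuousOn).mul hgamx
  have hc1y : ContinuousOn (fun r => Real.exp (p.C * r) * p.Th2 r * p.gam y r)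
      (Set.Icc 0 p.T) := (((Real.continuous_exp.comp (by continuity)).mul
        hcTh2).continuousOn).mul hgamy
  have hc2x : ContinuousOn (fun r => Real.exp (p.C * r) * p.Th4 r * x r)
      (Set.Icc 0 p.T) := (((Real.continuous_exp.comp (by continuity)).mul
        hcTh4).continuousOn).mul hx
  have hc2y : ContinuousOn (fun r => Real.exp (p.C * r) * p.Th4 r * y r)
      (Set.Icc 0 p.T) := (((Real.continuous_exp.comp (by continuity)).mul
        hcTh4).continuousOn).mul hy
  have hΔτ : |p.tau x 0 - p.tau y 0| ≤
      C1 * (p.GamBar * p.ThBar3 * M) * p.ThBar2 + C1 * M * p.ThBar4 := by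
    have hJ1 : (∫ r in (0:ℝ)..p.T, Real.exp (p.C * r) * p.Th2 r * p.gam x r) -
        (∫ r in (0:ℝ)..p.T, Real.exp (p.C * r) * p.Th2 r * p.gam y r) =
        ∫ r in (0:ℝ)..p.T, Real.exp (p.C * r) * p.Th2 r * (p.gam x r - p.gam y r) := by
      rw [← intervalIntegral.integral_sub (Aux.ii_of_cOn p hc1x hT0 hTT)
        (Aux.ii_of_cOn p hc1y hT0 hTT)]
      exact intervalIntegral.integral_congr (fun r _ => by ring)
    have hJ2 : (∫ r in (0:ℝ)..p.T, Real.exp (p.C * r) * p.Th4 r * x r) -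
        (∫ r in (0:ℝ)..p.T, Real.exp (p.C * r) * p.Th4 r * y r) =
        ∫ r in (0:ℝ)..p.T, Real.exp (p.C * r) * p.Th4 r * (x r - y r) := by
      rw [← intervalIntegral.integral_sub (Aux.ii_of_cOn p hc2x hT0 hTT)
        (Aux.ii_of_cOn p hc2y hT0 hTT)]
      exact intervalIntegral.integral_congr (fun r _ => by ring)
    have hsplit : p.tau x 0 - p.tau y 0 =
        (∫ r in (0:ℝ)..p.T, Real.exp (p.C * r) * p.Th2 r * (p.gam x r - p.gam y r)) +
        ∫ r in (0:ℝ)..p.T, Real.exp (p.C * r) * p.Th4 r * (x r - y r) := by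
      rw [htau0 x, htau0 y, ← hJ1, ← hJ2]; ring
    rw [hsplit]
    have hb1 : |∫ r in (0:ℝ)..p.T, Real.exp (p.C * r) * p.Th2 r * (p.gam x r - p.gam y r)|
        ≤ C1 * (p.GamBar * p.ThBar3 * M) * p.ThBar2 := by
      calc |∫ r in (0:ℝ)..p.T, Real.exp (p.C * r) * p.Th2 r * (p.gam x r - p.gam y r)|
          ≤ ∫ r in (0:ℝ)..p.T, |Real.exp (p.C * r) * p.Th2 r * (p.gam x r - p.gam y r)| :=
            intervalIntegral.abs_integral_le_integral_abs hT.le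
        _ ≤ ∫ r in (0:ℝ)..p.T, C1 * (p.GamBar * p.ThBar3 * M) * |p.Th2 r| := by
            refine intervalIntegral.integral_mono_on hT.le
              (Aux.ii_of_cOn p ((((Real.continuous_exp.comp (by continuity)).mul
                hcTh2).continuousOn).mul (hgamx.sub hgamy)).abs hT0 hTT)
              ((continuous_const.mul hcTh2.abs).intervalIntegrable 0 p.T) ?_
            intro r hr
            rw [abs_mul, abs_mul, Real.abs_exp]
            calc Real.exp (p.C * r) * |p.Th2 r| * |p.gam x r - p.gam y r|
                ≤ C1 * |p.Th2 r| * (p.GamBar * p.ThBar3 * M) := by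
                  refine mul_le_mul (mul_le_mul (hexpC r hr) le_rfl (abs_nonneg _)
                    hC1.le) (hΔγ r hr) (abs_nonneg _) (by positivity)
              _ = C1 * (p.GamBar * p.ThBar3 * M) * |p.Th2 r| := by ring
        _ = C1 * (p.GamBar * p.ThBar3 * M) * p.ThBar2 :=
            intervalIntegral.integral_const_mul _ _
    have hb2 : |∫ r in (0:ℝ)..p.T, Real.exp (p.C * r) * p.Th4 r * (x r - y r)|
        ≤ C1 * M * p.ThBar4 := by
      calc |∫ r in (0:ℝ)..p.T, Real.exp (p.C * r) * p.Th4 r * (x r - y r)|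
          ≤ ∫ r in (0:ℝ)..p.T, |Real.exp (p.C * r) * p.Th4 r * (x r - y r)| :=
            intervalIntegral.abs_integral_le_integral_abs hT.le
        _ ≤ ∫ r in (0:ℝ)..p.T, C1 * M * |p.Th4 r| := by
            refine intervalIntegral.integral_mono_on hT.le
              (Aux.ii_of_cOn p ((((Real.continuous_exp.comp (by continuity)).mul
                hcTh4).continuousOn).mul (hx.sub hy)).abs hT0 hTT)
              ((continuous_const.mul hcTh4.abs).intervalIntegrable 0 p.T) ?_
            intro r hr
            rw [abs_mul, abs_mul, Real.abs_exp]
            calc Real.exp (p.C * r) * |p.Th4 r| * |x r - y r|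
                ≤ C1 * |p.Th4 r| * M := by
                  refine mul_le_mul (mul_le_mul (hexpC r hr) le_rfl (abs_nonneg _)
                    hC1.le) (hMge r hr) (abs_nonneg _) (by positivity)
              _ = C1 * M * |p.Th4 r| := by ring
        _ = C1 * M * p.ThBar4 := intervalIntegral.integral_const_mul _ _
    calc |(∫ r in (0:ℝ)..p.T, Real.exp (p.C * r) * p.Th2 r * (p.gam x r - p.gam y r)) +
          ∫ r in (0:ℝ)..p.T, Real.exp (p.C * r) * p.Th4 r * (x r - y r)| ≤ _ + _ :=
        abs_add_le _ _
      _ ≤ C1 * (p.GamBar * p.ThBar3 * M) * p.ThBar2 + C1 * M * p.ThBar4 :=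
        add_le_add hb1 hb2
  -- Step C : pointwise bound on Tmap difference
  have hmain : ∀ t ∈ Set.Icc 0 p.T, |p.Tmap x t - p.Tmap y t| ≤
      M * (Real.exp ((2 * |p.C| + |p.F|) * p.T) * p.GamBar ^ 2 * p.ThBar1 * p.ThBar2 * p.ThBar3 +
        Real.exp ((2 * |p.C| + |p.F|) * p.T) * p.GamBar * p.ThBar1 * p.ThBar4 +
        Real.exp (|p.F| * p.T) * (p.B ^ 2 / p.R) * p.T * p.GamBar ^ 2 * p.ThBar3) := by
    intro t ht
    have hexpF : ∀ s ∈ Set.Icc 0 t, Real.exp (p.F * (t - s)) ≤ CF := by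
      intro s hs
      rw [hCFdef, Real.exp_le_exp]
      calc p.F * (t - s) ≤ |p.F * (t - s)| := le_abs_self _
        _ = |p.F| * |t - s| := abs_mul _ _
        _ ≤ |p.F| * p.T := by
            refine mul_le_mul_of_nonneg_left ?_ (abs_nonneg _)
            rw [abs_of_nonneg (by linarith [hs.2])]
            linarith [hs.1, ht.2]
    have hGL : Continuous (fun s => p.Gam s t) := Aux.continuous_Gam_left p hQ hR hB t
    have hcg1 : ContinuousOn
        (fun s => p.Gam s t * Real.exp (p.F * (t - s)) * (p.Th1 s * Real.exp (p.C * s)))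
        (Set.Icc 0 p.T) :=
      ((hGL.mul (Real.continuous_exp.comp (by continuity))).mul
        (hcTh1.mul (Real.continuous_exp.comp (by continuity)))).continuousOn
    have hcg2 : ContinuousOn
        (fun s => p.Gam s t * Real.exp (p.F * (t - s)) * (p.gam x s - p.gam y s))
        (Set.Icc 0 p.T) :=
      ((hGL.mul (Real.continuous_exp.comp (by continuity))).continuousOn).mul
        (hgamx.sub hgamy)
    have hfxc : ∀ (xb : ℝ → ℝ), ContinuousOn (p.gam xb) (Set.Icc 0 p.T) →
        ContinuousOn (fun s => p.Gam s t * Real.exp (p.F * (t - s)) *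
          ((p.zeta 0 * p.x0 + p.tau xb 0) * p.Th1 s * Real.exp (p.C * s) -
            p.B ^ 2 / p.R * p.gam xb s)) (Set.Icc 0 p.T) := by
      intro xb hgxb
      exact ((hGL.mul (Real.continuous_exp.comp (by continuity))).continuousOn).mul
        ((((continuous_const.mul hcTh1).mul
          (Real.continuous_exp.comp (by continuity))).continuousOn).sub
          (continuousOn_const.mul hgxb))
    have hsplit : p.Tmap x t - p.Tmap y t =
        (p.tau x 0 - p.tau y 0) *
          (∫ s in (0:ℝ)..t, p.Gam s t * Real.exp (p.F * (t - s)) *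
            (p.Th1 s * Real.exp (p.C * s))) -
        p.B ^ 2 / p.R *
          ∫ s in (0:ℝ)..t, p.Gam s t * Real.exp (p.F * (t - s)) *
            (p.gam x s - p.gam y s) := by
      have h1 : p.Tmap x t - p.Tmap y t =
          ∫ s in (0:ℝ)..t,
            (p.Gam s t * Real.exp (p.F * (t - s)) *
              ((p.zeta 0 * p.x0 + p.tau x 0) * p.Th1 s * Real.exp (p.C * s) -
                p.B ^ 2 / p.R * p.gam x s) -
            p.Gam s t * Real.exp (p.F * (t - s)) *
              ((p.zeta 0 * p.x0 + p.tau y 0) * p.Th1 s * Real.exp (p.C * s) -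
                p.B ^ 2 / p.R * p.gam y s)) := by
        rw [intervalIntegral.integral_sub (Aux.ii_of_cOn p (hfxc x hgamx) hT0 ht)
          (Aux.ii_of_cOn p (hfxc y hgamy) hT0 ht)]
        show p.Tmap x t - p.Tmap y t = _ - _
        unfold P.Tmap
        ring
      rw [h1]
      calc (∫ s in (0:ℝ)..t,
            (p.Gam s t * Real.exp (p.F * (t - s)) *
              ((p.zeta 0 * p.x0 + p.tau x 0) * p.Th1 s * Real.exp (p.C * s) -
                p.B ^ 2 / p.R * p.gam x s) -
            p.Gam s t * Real.exp (p.F * (t - s)) *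
              ((p.zeta 0 * p.x0 + p.tau y 0) * p.Th1 s * Real.exp (p.C * s) -
                p.B ^ 2 / p.R * p.gam y s)))
          = ∫ s in (0:ℝ)..t,
            ((p.tau x 0 - p.tau y 0) *
              (p.Gam s t * Real.exp (p.F * (t - s)) * (p.Th1 s * Real.exp (p.C * s))) -
            p.B ^ 2 / p.R *
              (p.Gam s t * Real.exp (p.F * (t - s)) * (p.gam x s - p.gam y s))) :=
            intervalIntegral.integral_congr (fun s _ => by ring)
        _ = _ := by
            rw [intervalIntegral.integral_sub
              ((Aux.ii_of_cOn p hcg1 hT0 ht).const_mul _)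
              ((Aux.ii_of_cOn p hcg2 hT0 ht).const_mul _),
              intervalIntegral.integral_const_mul, intervalIntegral.integral_const_mul]
    have hI1 : |∫ s in (0:ℝ)..t, p.Gam s t * Real.exp (p.F * (t - s)) *
        (p.Th1 s * Real.exp (p.C * s))| ≤ p.GamBar * CF * C1 * p.ThBar1 := by
      calc |∫ s in (0:ℝ)..t, p.Gam s t * Real.exp (p.F * (t - s)) *
            (p.Th1 s * Real.exp (p.C * s))|
          ≤ ∫ s in (0:ℝ)..t, |p.Gam s t * Real.exp (p.F * (t - s)) *
            (p.Th1 s * Real.exp (p.C * s))| :=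
            intervalIntegral.abs_integral_le_integral_abs ht.1
        _ ≤ ∫ s in (0:ℝ)..t, p.GamBar * CF * C1 * |p.Th1 s| := by
            refine intervalIntegral.integral_mono_on ht.1
              (Aux.ii_of_cOn p hcg1.abs hT0 ht)
              ((continuous_const.mul hcTh1.abs).intervalIntegrable 0 t) ?_
            intro s hs
            have hs' : s ∈ Set.Icc 0 p.T := ⟨hs.1, hs.2.trans ht.2⟩
            simp only [abs_mul, Real.abs_exp]
            rw [abs_of_pos (Aux.Gam_pos p s t)]
            calc p.Gam s t * Real.exp (p.F * (t - s)) * (|p.Th1 s| * Real.exp (p.C * s))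
                ≤ p.GamBar * CF * (|p.Th1 s| * C1) := by
                  refine mul_le_mul (mul_le_mul (Aux.Gam_le p hQ hR hB hs' ht)
                    (hexpF s hs) (Real.exp_pos _).le hΓ.le)
                    (mul_le_mul le_rfl (hexpC s hs') (Real.exp_pos _).le (abs_nonneg _))
                    (by positivity) (by positivity)
              _ = p.GamBar * CF * C1 * |p.Th1 s| := by ring
        _ = p.GamBar * CF * C1 * ∫ s in (0:ℝ)..t, |p.Th1 s| :=
            intervalIntegral.integral_const_mul _ _
        _ ≤ p.GamBar * CF * C1 * p.ThBar1 := by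
            refine mul_le_mul_of_nonneg_left ?_ (by positivity)
            exact intervalIntegral.integral_mono_interval le_rfl ht.1 ht.2
              (Filter.Eventually.of_forall fun v => abs_nonneg _)
              (hcTh1.abs.intervalIntegrable 0 p.T)
    have hI2 : |∫ s in (0:ℝ)..t, p.Gam s t * Real.exp (p.F * (t - s)) *
        (p.gam x s - p.gam y s)| ≤ p.GamBar * CF * (p.GamBar * p.ThBar3 * M) * p.T := by
      have hb : ∀ s ∈ Set.uIoc (0:ℝ) t,
          ‖p.Gam s t * Real.exp (p.F * (t - s)) * (p.gam x s - p.gam y s)‖ ≤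
            p.GamBar * CF * (p.GamBar * p.ThBar3 * M) := by
        intro s hs
        rw [Set.uIoc_of_le ht.1] at hs
        have hs1 : s ∈ Set.Icc 0 t := ⟨hs.1.le, hs.2⟩
        have hs' : s ∈ Set.Icc 0 p.T := ⟨hs.1.le, hs.2.trans ht.2⟩
        rw [Real.norm_eq_abs, abs_mul, abs_mul, abs_of_pos (Aux.Gam_pos p s t),
          Real.abs_exp]
        refine mul_le_mul (mul_le_mul (Aux.Gam_le p hQ hR hB hs' ht) (hexpF s hs1)
          (Real.exp_pos _).le hΓ.le) (hΔγ s hs') (abs_nonneg _) (by positivity)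
      have := intervalIntegral.norm_integral_le_of_norm_le_const hb
      rw [Real.norm_eq_abs] at this
      calc |∫ s in (0:ℝ)..t, p.Gam s t * Real.exp (p.F * (t - s)) *
            (p.gam x s - p.gam y s)|
          ≤ p.GamBar * CF * (p.GamBar * p.ThBar3 * M) * |t - 0| := this
        _ ≤ p.GamBar * CF * (p.GamBar * p.ThBar3 * M) * p.T := by
            refine mul_le_mul_of_nonneg_left ?_ (by positivity)
            rw [sub_zero, abs_of_nonneg ht.1]; exact ht.2
    have hexp2 : Real.exp ((2 * |p.C| + |p.F|) * p.T) = C1 * C1 * CF := by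
      rw [hC1def, hCFdef, ← Real.exp_add, ← Real.exp_add]
      congr 1; ring
    rw [hsplit]
    calc |(p.tau x 0 - p.tau y 0) *
          (∫ s in (0:ℝ)..t, p.Gam s t * Real.exp (p.F * (t - s)) *
            (p.Th1 s * Real.exp (p.C * s))) -
        p.B ^ 2 / p.R *
          ∫ s in (0:ℝ)..t, p.Gam s t * Real.exp (p.F * (t - s)) *
            (p.gam x s - p.gam y s)|
        ≤ |(p.tau x 0 - p.tau y 0) *
          (∫ s in (0:ℝ)..t, p.Gam s t * Real.exp (p.F * (t - s)) *
            (p.Th1 s * Real.exp (p.C * s)))| +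
          |p.B ^ 2 / p.R *
          ∫ s in (0:ℝ)..t, p.Gam s t * Real.exp (p.F * (t - s)) *
            (p.gam x s - p.gam y s)| := abs_sub _ _
      _ ≤ (C1 * (p.GamBar * p.ThBar3 * M) * p.ThBar2 + C1 * M * p.ThBar4) *
            (p.GamBar * CF * C1 * p.ThBar1) +
          p.B ^ 2 / p.R * (p.GamBar * CF * (p.GamBar * p.ThBar3 * M) * p.T) := by
          rw [abs_mul, abs_mul, abs_of_pos hBR]
          exact add_le_add
            (mul_le_mul hΔτ hI1 (abs_nonneg _) (by positivity))
            (mul_le_mul_of_nonneg_left hI2 hBR.le)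
      _ = M * (C1 * C1 * CF * p.GamBar ^ 2 * p.ThBar1 * p.ThBar2 * p.ThBar3 +
            C1 * C1 * CF * p.GamBar * p.ThBar1 * p.ThBar4 +
            CF * (p.B ^ 2 / p.R) * p.T * p.GamBar ^ 2 * p.ThBar3) := by ring
      _ = _ := by rw [hexp2, hCFdef]
  refine Real.sSup_le ?_ ?_
  · rintro z ⟨t, ht, rfl⟩
    exact hmain t ht
  · exact mul_nonneg hM0 (by positivity)

end
end
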